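/- arXiv:1503.08593 — 7 statements merged into one kernel-verified Lean document; each statement's English description precedes it below -/
import Mathlib

section
/- Let p, q ≥ 1 be coprime integers, and let a₀₀₀, a₁₀₀, a₀₁₀, a₀₀₁, a₁ₚq ∈ ℂ be all nonzero. Then the polynomial f(x,y,z) = a₀₀₀ + a₁₀₀·x + a₀₁₀·y + a₀₀₁·z + a₁ₚq·x·yᵖ·z^q has a singular point in (ℂ ∖ {0})³ if and only if (−1)^{1+p+q} · pᵖ · q^q · a₀₀₀^{p+q} · a₁ₚq = (p+q)^{p+q} · a₁₀₀ · a₀₁₀ᵖ · a₀₀₁^q. -/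
/-!
On the torus, `w` is a singular point of `f` iff `f` and the Euler derivatives `wᵢ ∂ᵢf` vanish
at `w`. Writing `t` for the value of the top monomial `a1pq x yᵖ z^q`, these four equations are
linear: `a100 x = -t`, `a010 y = -p t`, `a001 z = -q t` and `a000 = (p + q) t`. Substituting this
solution into `t = a1pq x yᵖ z^q` gives the discriminantal equation, and conversely the
discriminantal equation is exactly what makes `t = a000 / (p + q)` consistent.
-/

open MvPolynomial

noncomputable section

/-- `p` is a singular point of `h` lying in the torus `(ℂ ∖ {0})³`. -/
def SingularAt3 (h : MvPolynomial (Fin 3) ℂ) (p : Fin 3 → ℂ) : Prop :=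
  (∀ i, p i ≠ 0) ∧ eval p h = 0 ∧ ∀ i : Fin 3, eval p (pderiv i h) = 0

theorem singularAt3_iff_mul_pderiv (h : MvPolynomial (Fin 3) ℂ) (w : Fin 3 → ℂ) :
    SingularAt3 h w ↔
      (∀ i, w i ≠ 0) ∧ eval w h = 0 ∧ ∀ i : Fin 3, w i * eval w (pderiv i h) = 0 := by
  refine and_congr_right fun hw => and_congr_right fun _ => forall_congr' fun i => ?_
  rw [mul_eq_zero, or_iff_right (hw i)]

section Pentatope

variable {R : Type*} [CommRing R] (p q : ℕ) (a000 a100 a010 a001 a1pq : R) (w : Fin 3 → R)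

theorem mul_natCast_mul_pow_pred (a : R) (n : ℕ) : a * (n * a ^ (n - 1)) = n * a ^ n := by
  cases n with
  | zero => simp
  | succ n => rw [Nat.add_sub_cancel, pow_succ]; ring

def pentatopePoly : MvPolynomial (Fin 3) R :=
  C a000 + C a100 * X 0 + C a010 * X 1 + C a001 * X 2 + C a1pq * (X 0 * X 1 ^ p * X 2 ^ q)

theorem eval_pentatopePoly :
    eval w (pentatopePoly p q a000 a100 a010 a001 a1pq) =
      a000 + a100 * w 0 + a010 * w 1 + a001 * w 2 + a1pq * (w 0 * w 1 ^ p * w 2 ^ q) := by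
  simp [pentatopePoly]

theorem mul_eval_pderiv_pentatopePoly :
    w 0 * eval w (pderiv 0 (pentatopePoly p q a000 a100 a010 a001 a1pq)) =
        a100 * w 0 + a1pq * (w 0 * w 1 ^ p * w 2 ^ q) ∧
      w 1 * eval w (pderiv 1 (pentatopePoly p q a000 a100 a010 a001 a1pq)) =
        a010 * w 1 + p * (a1pq * (w 0 * w 1 ^ p * w 2 ^ q)) ∧
      w 2 * eval w (pderiv 2 (pentatopePoly p q a000 a100 a010 a001 a1pq)) =
        a001 * w 2 + q * (a1pq * (w 0 * w 1 ^ p * w 2 ^ q)) := by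
  refine ⟨?_, ?_, ?_⟩ <;>
  simp only [pentatopePoly, map_add, derivation_C, Derivation.leibniz, Derivation.leibniz_pow,
    pderiv_X, Pi.single_eq_same, Pi.single_eq_of_ne, ne_eq, Fin.reduceEq, not_false_eq_true,
    smul_eq_mul, nsmul_eq_mul, mul_one, mul_zero, add_zero, zero_add, eval_C, eval_X, map_mul,
    map_pow, map_natCast]
  · ring
  · linear_combination a1pq * w 0 * w 2 ^ q * mul_natCast_mul_pow_pred (w 1) p
  · linear_combination a1pq * w 0 * w 1 ^ p * mul_natCast_mul_pow_pred (w 2) q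

end Pentatope

/-- The equations `f = x ∂ₓf = y ∂_y f = z ∂_z f = 0` for
`f = pentatopePoly p q a000 a100 a010 a001 a1pq`, in which the value `a1pq * (x * y ^ p * z ^ q)`
of the top monomial is replaced by the unknown `t`. -/
def IsPentatopeCritical {K : Type*} [CommRing K] (p q : ℕ) (a000 a100 a010 a001 x y z t : K) :
    Prop :=
  a000 + a100 * x + a010 * y + a001 * z + t = 0 ∧ a100 * x + t = 0 ∧
    a010 * y + p * t = 0 ∧ a001 * z + q * t = 0

section Critical

variable {K : Type*} (p q : ℕ) {a000 a100 a010 a001 a1pq x y z t : K}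

theorem IsPentatopeCritical.discriminant_mul_monomial [CommRing K]
    (h : IsPentatopeCritical p q a000 a100 a010 a001 x y z t) :
    ((p : K) + q) ^ (p + q) * a100 * a010 ^ p * a001 ^ q * (x * y ^ p * z ^ q) =
      (-1) ^ (1 + p + q) * (p : K) ^ p * q ^ q * a000 ^ (p + q) * t := by
  obtain ⟨hf, hx, hy, hz⟩ := h
  have ha : a000 = (p + q) * t := by linear_combination hf - hx - hy - hz
  calc ((p : K) + q) ^ (p + q) * a100 * a010 ^ p * a001 ^ q * (x * y ^ p * z ^ q)
      = ((p : K) + q) ^ (p + q) * (a100 * x) * (a010 * y) ^ p * (a001 * z) ^ q := by ring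
    _ = ((p : K) + q) ^ (p + q) * (-t) * (-(p * t)) ^ p * (-(q * t)) ^ q := by
      rw [eq_neg_of_add_eq_zero_left hx, eq_neg_of_add_eq_zero_left hy,
        eq_neg_of_add_eq_zero_left hz]
    _ = (-1) ^ (1 + p + q) * (p : K) ^ p * q ^ q * a000 ^ (p + q) * t := by
      rw [ha, mul_pow]; ring

theorem isPentatopeCritical_neg_div [Field K] (h100 : a100 ≠ 0) (h010 : a010 ≠ 0)
    (h001 : a001 ≠ 0) (ht : ((p : K) + q) * t = a000) :
    IsPentatopeCritical p q a000 a100 a010 a001 (-t / a100) (-(p * t) / a010) (-(q * t) / a001)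
      t := by
  rw [IsPentatopeCritical, mul_div_cancel₀ _ h100, mul_div_cancel₀ _ h010,
    mul_div_cancel₀ _ h001]
  exact ⟨by linear_combination -ht, neg_add_cancel _, neg_add_cancel _, neg_add_cancel _⟩

theorem IsPentatopeCritical.discriminant_eq [CommRing K] [IsDomain K]
    (hx : x ≠ 0) (hy : y ≠ 0) (hz : z ≠ 0)
    (h : IsPentatopeCritical p q a000 a100 a010 a001 x y z (a1pq * (x * y ^ p * z ^ q))) :
    (-1) ^ (1 + p + q) * (p : K) ^ p * q ^ q * a000 ^ (p + q) * a1pq =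
      ((p : K) + q) ^ (p + q) * a100 * a010 ^ p * a001 ^ q := by
  refine mul_right_cancel₀ (by simp [hx, hy, hz] : x * y ^ p * z ^ q ≠ 0) ?_
  linear_combination -h.discriminant_mul_monomial

theorem exists_isPentatopeCritical_of_discriminant_eq [Field K] [CharZero K]
    (hp : p ≠ 0) (hq : q ≠ 0) (h000 : a000 ≠ 0) (h100 : a100 ≠ 0) (h010 : a010 ≠ 0)
    (h001 : a001 ≠ 0)
    (heq : (-1) ^ (1 + p + q) * (p : K) ^ p * q ^ q * a000 ^ (p + q) * a1pq =
      ((p : K) + q) ^ (p + q) * a100 * a010 ^ p * a001 ^ q) :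
    ∃ x y z : K, x ≠ 0 ∧ y ≠ 0 ∧ z ≠ 0 ∧
      IsPentatopeCritical p q a000 a100 a010 a001 x y z (a1pq * (x * y ^ p * z ^ q)) := by
  have hpq : (p : K) + q ≠ 0 := by norm_cast; omega
  set t := a000 / ((p : K) + q)
  have ht : t ≠ 0 := div_ne_zero h000 hpq
  have hcrit := isPentatopeCritical_neg_div p q h100 h010 h001 (mul_div_cancel₀ a000 hpq)
  set x := -t / a100
  set y := -(p * t) / a010
  set z := -(q * t) / a001
  refine ⟨x, y, z, by simp [x, ht, h100], by simp [y, ht, h010, hp], by simp [z, ht, h001, hq], ?_⟩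
  convert hcrit using 1
  have hc : (-1) ^ (1 + p + q) * (p : K) ^ p * q ^ q * a000 ^ (p + q) ≠ 0 := by simp [*]
  refine mul_left_cancel₀ hc ?_
  linear_combination (x * y ^ p * z ^ q) * heq + hcrit.discriminant_mul_monomial

end Critical

theorem singularAt3_pentatopePoly_iff (p q : ℕ) (a000 a100 a010 a001 a1pq : ℂ) (w : Fin 3 → ℂ) :
    SingularAt3 (pentatopePoly p q a000 a100 a010 a001 a1pq) w ↔
      (∀ i, w i ≠ 0) ∧ IsPentatopeCritical p q a000 a100 a010 a001 (w 0) (w 1) (w 2)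
        (a1pq * (w 0 * w 1 ^ p * w 2 ^ q)) := by
  obtain ⟨h0, h1, h2⟩ := mul_eval_pderiv_pentatopePoly p q a000 a100 a010 a001 a1pq w
  rw [singularAt3_iff_mul_pderiv, eval_pentatopePoly, IsPentatopeCritical, ← h0, ← h1, ← h2]
  refine and_congr_right fun _ => and_congr_right fun _ => ⟨fun h => ⟨h 0, h 1, h 2⟩, ?_⟩
  rintro ⟨hx, hy, hz⟩ i
  fin_cases i
  exacts [hx, hy, hz]

theorem pentatope_discriminantal_equation_general
    (p q : ℕ) (hp : 1 ≤ p) (hq : 1 ≤ q)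
    (a000 a100 a010 a001 a1pq : ℂ)
    (h000 : a000 ≠ 0) (h100 : a100 ≠ 0) (h010 : a010 ≠ 0)
    (h001 : a001 ≠ 0) :
    (∃ z : Fin 3 → ℂ,
        SingularAt3 (C a000 + C a100 * X 0 + C a010 * X 1 + C a001 * X 2 +
          C a1pq * (X 0 * X 1 ^ p * X 2 ^ q)) z) ↔
      (-1 : ℂ) ^ (1 + p + q) * (p : ℂ) ^ p * (q : ℂ) ^ q * a000 ^ (p + q) * a1pq =
        ((p : ℂ) + (q : ℂ)) ^ (p + q) * a100 * a010 ^ p * a001 ^ q := by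
  change (∃ w, SingularAt3 (pentatopePoly p q a000 a100 a010 a001 a1pq) w) ↔ _
  simp_rw [singularAt3_pentatopePoly_iff]
  constructor
  · rintro ⟨w, hw, hcrit⟩
    exact hcrit.discriminant_eq p q (hw 0) (hw 1) (hw 2)
  · intro heq
    obtain ⟨x, y, z, hx, hy, hz, hcrit⟩ :=
      exists_isPentatopeCritical_of_discriminant_eq p q (by omega) (by omega) h000 h100 h010 h001 heq
    refine ⟨![x, y, z], fun i => ?_, hcrit⟩
    fin_cases i
    exacts [hx, hy, hz]

theorem pentatope_discriminantal_equation
    (p q : ℕ) (hp : 1 ≤ p) (hq : 1 ≤ q) (hpq : Nat.Coprime p q)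
    (a000 a100 a010 a001 a1pq : ℂ)
    (h000 : a000 ≠ 0) (h100 : a100 ≠ 0) (h010 : a010 ≠ 0)
    (h001 : a001 ≠ 0) (h1pq : a1pq ≠ 0) :
    (∃ z : Fin 3 → ℂ,
        SingularAt3 (C a000 + C a100 * X 0 + C a010 * X 1 + C a001 * X 2 +
          C a1pq * (X 0 * X 1 ^ p * X 2 ^ q)) z) ↔
      (-1 : ℂ) ^ (1 + p + q) * (p : ℂ) ^ p * (q : ℂ) ^ q * a000 ^ (p + q) * a1pq =
        ((p : ℂ) + (q : ℂ)) ^ (p + q) * a100 * a010 ^ p * a001 ^ q :=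
  pentatope_discriminantal_equation_general p q hp hq a000 a100 a010 a001 a1pq h000 h100 h010 h001

end
end

section
/- Let a₁, a₂, a₃ ∈ ℂ ∖ {0}. Then the set of b ∈ ℂ such that the polynomial f_b(x,y) = a₁·x + a₂·x²·y + a₃·y² + b·x·y has a singular point in (ℂ ∖ {0})² has exactly 3 elements; moreover, for each such b the singular point in (ℂ ∖ {0})² is unique and is nondegenerate, i.e. the determinant of the Hessian matrix of f_b at that point is nonzero. -/
/-!
Eliminating with the Euler-type combination `x f_x + y f_y - 2 f = x (a₂ x y - a₁)` shows that at a
singular point in the torus `a₂ x y = a₁`, hence `b y = -3 a₁`, `3 a₂ x = -b` and `b³ = -27 a₁ a₂ a₃`.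
Conversely every cube root `b` of `-27 a₁ a₂ a₃` gives the singular point `(-b / (3 a₂), -3 a₁ / b)`,
where the Hessian determinant equals `b² / 3 ≠ 0`.
-/

open MvPolynomial

noncomputable section

/-- `p` is a singular point of `h` lying in the torus `(ℂ ∖ {0})²`. -/
def SingularAt2 (h : MvPolynomial (Fin 2) ℂ) (p : Fin 2 → ℂ) : Prop :=
  (∀ i, p i ≠ 0) ∧ eval p h = 0 ∧ ∀ i : Fin 2, eval p (pderiv i h) = 0

/-- Determinant of the Hessian matrix of a polynomial in two variables at `p`. -/
def hessDet2 (h : MvPolynomial (Fin 2) ℂ) (p : Fin 2 → ℂ) : ℂ :=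
  Matrix.det (Matrix.of fun i j : Fin 2 => eval p (pderiv i (pderiv j h)))

/-- The circuit-C polynomial `a₁·x + a₂·x²y + a₃·y² + b·xy`. -/
def circuitC (a1 a2 a3 b : ℂ) : MvPolynomial (Fin 2) ℂ :=
  C a1 * X 0 + C a2 * X 0 ^ 2 * X 1 + C a3 * X 1 ^ 2 + C b * X 0 * X 1

theorem Complex.ncard_setOf_pow_eq {n : ℕ} (hn : n ≠ 0) {c : ℂ} (hc : c ≠ 0) :
    {z : ℂ | z ^ n = c}.ncard = n := by
  have hζ : IsPrimitiveRoot (Complex.exp (2 * Real.pi * Complex.I / n)) n :=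
    Complex.isPrimitiveRoot_exp n hn
  have hset : {z : ℂ | z ^ n = c} = ((Polynomial.nthRoots n c).toFinset : Set ℂ) := by
    ext z
    simp [Polynomial.mem_nthRoots (Nat.pos_of_ne_zero hn)]
  rw [hset, Set.ncard_coe_finset, Multiset.toFinset_card_of_nodup (hζ.nthRoots_nodup hc),
    hζ.card_nthRoots, if_pos (IsAlgClosed.exists_pow_nat_eq c (Nat.pos_of_ne_zero hn))]

theorem Derivation.map_ofNat {R A M : Type*} [CommSemiring R] [CommSemiring A] [Algebra R A]
    [AddCommMonoid M] [Module A M] [Module R M] (D : Derivation R A M) (n : ℕ) [n.AtLeastTwo] :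
    D (no_index (OfNat.ofNat n : A)) = 0 := by
  rw [← Nat.cast_ofNat]
  exact D.map_natCast n

namespace CircuitC

variable (a1 a2 a3 b : ℂ) (p : Fin 2 → ℂ)

theorem eval_circuitC :
    eval p (circuitC a1 a2 a3 b) = a1 * p 0 + a2 * p 0 ^ 2 * p 1 + a3 * p 1 ^ 2 + b * p 0 * p 1 := by
  simp [circuitC]

theorem eval_pderiv_zero :
    eval p (pderiv 0 (circuitC a1 a2 a3 b)) = a1 + 2 * a2 * p 0 * p 1 + b * p 1 := by
  simp [circuitC]
  ring

theorem eval_pderiv_one :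
    eval p (pderiv 1 (circuitC a1 a2 a3 b)) = a2 * p 0 ^ 2 + 2 * a3 * p 1 + b * p 0 := by
  simp [circuitC]
  ring

theorem hessDet2_circuitC :
    hessDet2 (circuitC a1 a2 a3 b) p = 4 * a2 * a3 * p 1 - (2 * a2 * p 0 + b) ^ 2 := by
  rw [hessDet2, Matrix.det_fin_two]
  simp [circuitC, Derivation.map_ofNat]
  ring

def singularPoint (a1 a2 b : ℂ) : Fin 2 → ℂ := ![-b / (3 * a2), -3 * a1 / b]

@[simp] theorem singularPoint_zero (a1 a2 b : ℂ) : singularPoint a1 a2 b 0 = -b / (3 * a2) := rfl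

@[simp] theorem singularPoint_one (a1 a2 b : ℂ) : singularPoint a1 a2 b 1 = -3 * a1 / b := rfl

variable {a1 a2 a3 b p} in
theorem singularAt2_iff (h1 : a1 ≠ 0) (h2 : a2 ≠ 0) (h3 : a3 ≠ 0) :
    SingularAt2 (circuitC a1 a2 a3 b) p ↔
      b ^ 3 = -27 * a1 * a2 * a3 ∧ p = singularPoint a1 a2 b := by
  rw [SingularAt2, Fin.forall_fin_two, Fin.forall_fin_two, eval_circuitC, eval_pderiv_zero,
    eval_pderiv_one]
  constructor
  · rintro ⟨⟨hx, -⟩, hf, hfx, hfy⟩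
    have hxy : a2 * p 0 * p 1 = a1 := by
      have : p 0 * (a2 * p 0 * p 1 - a1) = 0 := by
        linear_combination p 0 * hfx + p 1 * hfy - 2 * hf
      linear_combination (mul_eq_zero.1 this).resolve_left hx
    have hby : b * p 1 = -3 * a1 := by linear_combination hfx - 2 * hxy
    have hb : b ≠ 0 := by rintro rfl; exact h1 (by linear_combination hby / 3)
    have hax : 3 * a2 * p 0 = -b := by
      have : a1 * (3 * a2 * p 0 + b) = 0 := by linear_combination a2 * p 0 * hby - b * hxy
      linear_combination (mul_eq_zero.1 this).resolve_left h1
    refine ⟨?_, funext (Fin.forall_fin_two.2 ⟨?_, ?_⟩)⟩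
    -- `9 a₂ b · f_y` becomes `-2 b³ - 54 a₁ a₂ a₃` after substituting `3 a₂ x = -b`, `b y = -3 a₁`.
    · linear_combination -(9 * a2 * b) / 2 * hfy + (3 * a2 * b * p 0 + 2 * b ^ 2) / 2 * hax
        + 9 * a2 * a3 * hby
    · rw [singularPoint_zero]
      field_simp
      linear_combination hax
    · rw [singularPoint_one]
      field_simp
      linear_combination hby
  · rintro ⟨hb3, rfl⟩
    have hb : b ≠ 0 := by rintro rfl; simp_all
    simp only [singularPoint_zero, singularPoint_one]
    refine ⟨⟨by simp [h2, hb], by simp [h1, hb]⟩, ?_, ?_, ?_⟩ <;> field_simp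
    · linear_combination a1 * hb3
    · ring
    · linear_combination -2 * hb3

end CircuitC

open CircuitC in
theorem circuitC_count (a1 a2 a3 : ℂ) (h1 : a1 ≠ 0) (h2 : a2 ≠ 0) (h3 : a3 ≠ 0) :
    {b : ℂ | ∃ p : Fin 2 → ℂ, SingularAt2 (circuitC a1 a2 a3 b) p}.Finite ∧
    {b : ℂ | ∃ p : Fin 2 → ℂ, SingularAt2 (circuitC a1 a2 a3 b) p}.ncard = 3 ∧
    ∀ b : ℂ, ∀ p : Fin 2 → ℂ, SingularAt2 (circuitC a1 a2 a3 b) p →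
      (∀ q : Fin 2 → ℂ, SingularAt2 (circuitC a1 a2 a3 b) q → q = p) ∧
      hessDet2 (circuitC a1 a2 a3 b) p ≠ 0 := by
  have hc : -27 * a1 * a2 * a3 ≠ 0 := by simp [h1, h2, h3]
  have hset : {b : ℂ | ∃ p : Fin 2 → ℂ, SingularAt2 (circuitC a1 a2 a3 b) p}
      = {b : ℂ | b ^ 3 = -27 * a1 * a2 * a3} := by
    ext b
    simp [singularAt2_iff h1 h2 h3]
  have hcard := Complex.ncard_setOf_pow_eq three_ne_zero hc
  refine ⟨hset ▸ Set.finite_of_ncard_ne_zero (by omega), hset ▸ hcard, fun b p hp => ?_⟩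
  obtain ⟨hb3, rfl⟩ := (singularAt2_iff h1 h2 h3).1 hp
  have hb : b ≠ 0 := by rintro rfl; simp_all
  refine ⟨fun q hq => ((singularAt2_iff h1 h2 h3).1 hq).2, ?_⟩
  have hhess : hessDet2 (circuitC a1 a2 a3 b) (singularPoint a1 a2 b) = b ^ 2 / 3 := by
    rw [hessDet2_circuitC]
    simp only [singularPoint_zero, singularPoint_one]
    field_simp
    linear_combination -4 * hb3
  simp [hhess, hb]

end
end

section
/- There exist exactly 4 complex numbers a such that the polynomial f(x,y,z) = 1 + x + y + x³·y⁷·z²⁰ + a·x·y²·z⁵ has a singular point in (ℂ ∖ {0})³. -/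
open MvPolynomial

noncomputable section

lemma circuitB_key (a : ℂ) :
    (∃ p : Fin 3 → ℂ,
      SingularAt3 (1 + X 0 + X 1 + X 0 ^ 3 * X 1 ^ 7 * X 2 ^ 20 +
        C a * (X 0 * X 1 ^ 2 * X 2 ^ 5)) p) ↔ a ^ 4 = 256 := by
  constructor
  · rintro ⟨p, hnz, h0, hd⟩
    have e1 := hd 0
    have e2 := hd 1
    have e3 := hd 2
    simp only [map_add, map_mul, map_one, map_pow, eval_C, eval_X, pderiv_mul, pderiv_pow,
      pderiv_X, pderiv_C] at h0 e1 e2 e3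
    simp at e1 e2 e3
    set x := p 0 with hxdef
    set y := p 1 with hydef
    set z := p 2 with hzdef
    -- abbreviations
    have ht : a * (x * y ^ 2 * z ^ 5) = -4 * (x ^ 3 * y ^ 7 * z ^ 20) := by
      linear_combination (z / 5) * e3
    have hxw : x = x ^ 3 * y ^ 7 * z ^ 20 := by
      linear_combination x * e1 - ht
    have hyw : y = x ^ 3 * y ^ 7 * z ^ 20 := by
      linear_combination y * e2 - 2 * ht
    have hw1 : x ^ 3 * y ^ 7 * z ^ 20 = 1 := by
      linear_combination -h0 + hxw + hyw + ht
    have hx1 : x = 1 := hxw.trans hw1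
    have hy1 : y = 1 := hyw.trans hw1
    have hz20 : z ^ 20 = 1 := by
      rw [hx1, hy1] at hw1; linear_combination hw1
    have haz : a * z ^ 5 = -4 := by
      have := ht
      rw [hx1, hy1] at this
      linear_combination this - 4 * hz20
    linear_combination ((a * z ^ 5) ^ 3 - 4 * (a * z ^ 5) ^ 2 + 16 * (a * z ^ 5) - 64) * haz
      - a ^ 4 * hz20
  · intro ha
    have ha0 : a ≠ 0 := by
      intro h; rw [h] at ha; norm_num at ha
    obtain ⟨z, hz5⟩ : ∃ z : ℂ, z ^ 5 = -4 / a :=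
      IsAlgClosed.exists_pow_nat_eq (-4 / a) (by norm_num)
    have hz0 : z ≠ 0 := by
      have h5 : z ^ 5 ≠ 0 := by
        rw [hz5]; exact div_ne_zero (by norm_num) ha0
      exact fun h => h5 (by rw [h]; ring)
    have haz : a * z ^ 5 = -4 := by
      rw [hz5]; field_simp
    have hz20 : z ^ 20 = 1 := by
      have h4 : (a * z ^ 5) ^ 4 = 256 := by rw [haz]; norm_num
      have : a ^ 4 * z ^ 20 = 256 := by linear_combination h4
      rw [ha] at this
      linear_combination this / 256
    refine ⟨![1, 1, z], ?_, ?_, ?_⟩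
    · intro i
      fin_cases i <;> simp [hz0]
    · simp only [map_add, map_mul, map_one, map_pow, eval_C, eval_X]
      simp
      linear_combination hz20 + haz
    · intro i
      fin_cases i
      · simp [pderiv_mul, pderiv_pow, pderiv_X]
        linear_combination 3 * hz20 + haz
      · simp [pderiv_mul, pderiv_pow, pderiv_X]
        linear_combination 7 * hz20 + 2 * haz
      · simp [pderiv_mul, pderiv_pow, pderiv_X]
        apply mul_left_cancel₀ hz0
        linear_combination 20 * hz20 + 5 * haz

theorem circuitB_exceptional_count :
    {a : ℂ | ∃ p : Fin 3 → ℂ,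
      SingularAt3 (1 + X 0 + X 1 + X 0 ^ 3 * X 1 ^ 7 * X 2 ^ 20 +
        C a * (X 0 * X 1 ^ 2 * X 2 ^ 5)) p}.ncard = 4 := by
  have hset : {a : ℂ | ∃ p : Fin 3 → ℂ,
      SingularAt3 (1 + X 0 + X 1 + X 0 ^ 3 * X 1 ^ 7 * X 2 ^ 20 +
        C a * (X 0 * X 1 ^ 2 * X 2 ^ 5)) p} =
      {4, -4, 4 * Complex.I, -(4 * Complex.I)} := by
    ext a
    rw [Set.mem_setOf_eq, circuitB_key]
    simp only [Set.mem_insert_iff, Set.mem_singleton_iff]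
    constructor
    · intro h
      have : (a - 4) * (a + 4) * ((a - 4 * Complex.I) * (a + 4 * Complex.I)) = 0 := by
        linear_combination h - 16 * (a ^ 2 - 16) * Complex.I_sq
      rcases mul_eq_zero.1 this with h1 | h1
      · rcases mul_eq_zero.1 h1 with h2 | h2
        · left; linear_combination h2
        · right; left; linear_combination h2
      · rcases mul_eq_zero.1 h1 with h2 | h2
        · right; right; left; linear_combination h2
        · right; right; right; linear_combination h2
    · rintro (rfl | rfl | rfl | rfl)
      · norm_num
      · norm_num
      · linear_combination (256 * (Complex.I ^ 2 - 1)) * Complex.I_sq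
      · linear_combination (256 * (Complex.I ^ 2 - 1)) * Complex.I_sq
  rw [hset]
  rw [Set.ncard_insert_of_notMem (by norm_num [Complex.ext_iff]),
    Set.ncard_insert_of_notMem (by norm_num [Complex.ext_iff]),
    Set.ncard_insert_of_notMem (by norm_num [Complex.ext_iff]),
    Set.ncard_singleton]

end
end

section
/- Let f ∈ ℂ[x,y,z] be a nonzero polynomial whose support (the set of exponent vectors of its nonzero monomials, viewed as a subset of ℚ³) is affinely independent. Then f has no singular point in (ℂ ∖ {0})³. -/
/-!
At a point `p` of the torus put `w m = c_m p^m` for each exponent `m` in the support of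
`f = ∑ c_m x^m`; these weights are all nonzero. Since `x_i ∂_i f = ∑ m_i c_m x^m`, a singular
point gives `∑ w m = 0` and `∑ w m • m = 0`, an affine dependence over `ℂ` among the exponent
vectors. Affine independence over `ℚ` survives base change to `ℂ`, so every `w m` would vanish.
-/

open MvPolynomial

noncomputable section

theorem AffineIndependent.algebraMap_comp {R S ι ι' : Type*} [CommRing R] [CommRing S]
    [Algebra R S] [FaithfulSMul R S] [IsDomain S] [Finite ι'] {p : ι → ι' → R}
    (hp : AffineIndependent R p) : AffineIndependent S (fun i => algebraMap R S ∘ p i) := by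
  cases isEmpty_or_nonempty ι with
  | inl _ => exact affineIndependent_of_subsingleton S _
  | inr h =>
    obtain ⟨i₀⟩ := h
    rw [affineIndependent_iff_linearIndependent_vsub R _ i₀] at hp
    rw [affineIndependent_iff_linearIndependent_vsub S _ i₀]
    simpa [Function.comp_def, Pi.sub_def] using linearIndependent_algebraMap_comp_iff (S := S).2 hp

namespace MvPolynomial

variable {σ R : Type*} [CommSemiring R]

theorem eval_monomial_ne_zero [NoZeroDivisors R] [Nontrivial R] {x : σ → R} (hx : ∀ i, x i ≠ 0)
    {m : σ →₀ ℕ} {c : R} (hc : c ≠ 0) : eval x (monomial m c) ≠ 0 := by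
  rw [eval_monomial]
  exact mul_ne_zero hc (Finsupp.prod_ne_zero_iff.2 fun i _ => pow_ne_zero _ (hx i))

theorem eval_eq_sum_eval_monomial (f : MvPolynomial σ R) (x : σ → R) :
    eval x f = ∑ m ∈ f.support, eval x (monomial m (coeff m f)) := by
  conv_lhs => rw [f.as_sum]
  rw [map_sum]

theorem eval_X_mul_pderiv (f : MvPolynomial σ R) (x : σ → R) (i : σ) :
    eval x (X i * pderiv i f) = ∑ m ∈ f.support, eval x (monomial m (coeff m f)) * m i := by
  conv_lhs => rw [f.as_sum]
  simp only [map_sum, Finset.mul_sum, X_mul_pderiv_monomial, nsmul_eq_mul, map_mul, map_natCast,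
    mul_comm]

end MvPolynomial

theorem no_singularity_for_simplicial_support
    (f : MvPolynomial (Fin 3) ℂ) (hf : f ≠ 0)
    (hA : AffineIndependent ℚ
      (fun m : f.support => (fun i => (m.1 i : ℚ) : Fin 3 → ℚ))) :
    ¬ ∃ p : Fin 3 → ℂ, SingularAt3 f p := by
  rintro ⟨p, hp0, hpf, hpd⟩
  obtain ⟨m₀, hm₀⟩ := support_nonempty.2 hf
  set w : f.support → ℂ := fun m => eval p (monomial m.1 (coeff m.1 f))
  have hAℂ : AffineIndependent ℂ (fun m : f.support => fun i => (m.1 i : ℂ)) := by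
    simpa [Function.comp_def] using hA.algebraMap_comp (S := ℂ)
  have hw₀ : ∑ m, w m = 0 := by
    rw [Finset.sum_coe_sort f.support fun m => eval p (monomial m (coeff m f)),
      ← eval_eq_sum_eval_monomial, hpf]
  have hw₁ : ∑ m, w m • (fun i => (m.1 i : ℂ)) = 0 := by
    ext i
    have h := eval_X_mul_pderiv f p i
    rw [eval_mul, hpd i, mul_zero] at h
    simpa only [Finset.sum_apply, Pi.smul_apply, smul_eq_mul, Pi.zero_apply, w,
      Finset.sum_coe_sort f.support fun m => eval p (monomial m (coeff m f)) * m i] using h.symm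
  exact eval_monomial_ne_zero hp0 (mem_support_iff.1 hm₀)
    (hAℂ.eq_zero_of_sum_eq_zero hw₀ hw₁ ⟨m₀, hm₀⟩ (Finset.mem_univ _))

end
end

section
/- Let a, b, c ∈ ℤ² be such that the origin lies in the interior of the triangle conv{a, b, c}, and let α₁, α₂, α₃ ∈ ℂ ∖ {0}. Define Q : (ℂ ∖ {0})² → ℂ by Q(z₁,z₂) = α₁·z₁^{a₁}z₂^{a₂} + α₂·z₁^{b₁}z₂^{b₂} + α₃·z₁^{c₁}z₂^{c₂} (integer, possibly negative, exponents). Then the set of critical points of Q in (ℂ ∖ {0})², i.e. points at which both partial derivatives ∂Q/∂z₁ and ∂Q/∂z₂ vanish, is finite of cardinality exactly |det(b − a, c − a)|, and each critical point is nondegenerate, i.e. the determinant of the Hessian matrix of Q there is nonzero. -/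
/-!
On the torus put `u = (α₁ z^a, α₂ z^b, α₃ z^c)`. Since `z₁ ∂₁Q = a₁u₁ + b₁u₂ + c₁u₃` and
`z₂ ∂₂Q = a₂u₁ + b₂u₂ + c₂u₃`, a point is critical iff `u = t • m` for the vector of minors
`m = (cross b c, cross c a, cross a b)`, i.e. iff `z^(a-c)` and `z^(b-c)` take prescribed nonzero
values. Such a binomial system `z^p = β, z^q = γ` has exactly `|cross p q|` solutions: shearing
`q` by multiples of `p` runs the Euclidean algorithm on the first coordinates and ends in a
triangular system, counted fibrewise by roots of unity. At a critical point Lagrange's identity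
gives `z₁²z₂² · hessDet = t² m₁m₂m₃(m₁ + m₂ + m₃)`. Since the origin is interior to the triangle,
no line through the origin contains two vertices and the vertices are not collinear, so the
minors and their sum `cross (b - a) (c - a)` are all nonzero.
-/

noncomputable section

/-- The Laurent trinomial `Q(z₁,z₂) = α₁ z₁^{a₁}z₂^{a₂} + α₂ z₁^{b₁}z₂^{b₂} + α₃ z₁^{c₁}z₂^{c₂}`. -/
def trinom (a b c : ℤ × ℤ) (α1 α2 α3 : ℂ) (z : ℂ × ℂ) : ℂ :=
  α1 * z.1 ^ a.1 * z.2 ^ a.2 + α2 * z.1 ^ b.1 * z.2 ^ b.2 + α3 * z.1 ^ c.1 * z.2 ^ c.2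

/-- `z` is a critical point of `Q` in the torus `(ℂ ∖ {0})²`. -/
def IsCritPt (Q : ℂ × ℂ → ℂ) (z : ℂ × ℂ) : Prop :=
  z.1 ≠ 0 ∧ z.2 ≠ 0 ∧
    deriv (fun w => Q (w, z.2)) z.1 = 0 ∧ deriv (fun w => Q (z.1, w)) z.2 = 0

/-- Determinant of the Hessian matrix of `Q : ℂ × ℂ → ℂ` at `z`. -/
def hessDet (Q : ℂ × ℂ → ℂ) (z : ℂ × ℂ) : ℂ :=
  deriv (deriv fun w => Q (w, z.2)) z.1 * deriv (deriv fun w => Q (z.1, w)) z.2 -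
    deriv (fun w2 => deriv (fun w1 => Q (w1, w2)) z.1) z.2 *
      deriv (fun w1 => deriv (fun w2 => Q (w1, w2)) z.2) z.1

/-- The point of `ℝ²` associated to a lattice point. -/
def toR2 (v : ℤ × ℤ) : ℝ × ℝ := ((v.1 : ℝ), (v.2 : ℝ))

open Set

def cross {R : Type*} [CommRing R] (p q : R × R) : R := p.1 * q.2 - p.2 * q.1

theorem encard_pow_eq {n : ℕ} (hn : n ≠ 0) {w : ℂ} (hw : w ≠ 0) :
    {z : ℂ | z ^ n = w}.encard = n := by
  classical
  have hζ := Complex.isPrimitiveRoot_exp n hn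
  have hroots : {z : ℂ | z ^ n = w} = ↑(Polynomial.nthRootsFinset n w) := by
    ext; simp [Polynomial.mem_nthRootsFinset (Nat.pos_of_ne_zero hn)]
  rw [hroots, encard_coe_eq_coe_finsetCard, Polynomial.nthRootsFinset,
    Multiset.toFinset_card_of_nodup (hζ.nthRoots_nodup hw), hζ.card_nthRoots,
    if_pos (IsAlgClosed.exists_pow_nat_eq w (Nat.pos_of_ne_zero hn))]

theorem encard_zpow_eq {n : ℤ} (hn : n ≠ 0) {w : ℂ} (hw : w ≠ 0) :
    {z : ℂ | z ^ n = w}.encard = n.natAbs := by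
  obtain ⟨m, rfl | rfl⟩ := Int.eq_nat_or_neg n
  · simpa using encard_pow_eq (n := m) (by omega) hw
  · have hinv : {z : ℂ | z ^ (-(m : ℤ)) = w} = {z | z ^ m = w⁻¹} := by
      ext; simp [zpow_neg, inv_eq_iff_eq_inv]
    rw [hinv, encard_pow_eq (by omega) (inv_ne_zero hw)]
    simp

theorem encard_eq_encard_mul_of_fibers {α β : Type*} {s : Set (α × β)} {t : Set β} {m : ℕ∞}
    (ht : t.Finite) (hst : ∀ z ∈ s, z.2 ∈ t) (hfib : ∀ y ∈ t, {x | (x, y) ∈ s}.encard = m) :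
    s.encard = t.encard * m := by
  have hunion : s = ⋃ y ∈ t, (fun x => (x, y)) '' {x | (x, y) ∈ s} := by
    ext z
    simp only [mem_iUnion, mem_image, mem_ofPred_eq, exists_prop]
    exact ⟨fun hz => ⟨z.2, hst z hz, z.1, hz, rfl⟩, by rintro ⟨y, -, x, hx, rfl⟩; exact hx⟩
  have hdisj : t.PairwiseDisjoint fun y => (fun x => (x, y)) '' {x | (x, y) ∈ s} := by
    intro y _ y' _ hne
    refine disjoint_left.2 ?_
    rintro _ ⟨x, -, rfl⟩ ⟨x', -, h⟩
    exact hne (congrArg Prod.snd h).symm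
  rw [hunion, ht.encard_biUnion hdisj, finsum_mem_eq_finite_toFinset_sum _ ht,
    Finset.sum_congr rfl fun y hy => ((Prod.mk_left_injective y).encard_image _).trans
      (hfib y (ht.mem_toFinset.1 hy)),
    Finset.sum_const, nsmul_eq_mul, ht.encard_eq_coe_toFinset_card]

def monom (p : ℤ × ℤ) (z : ℂ × ℂ) : ℂ := z.1 ^ p.1 * z.2 ^ p.2

theorem monom_ne_zero {z : ℂ × ℂ} (h1 : z.1 ≠ 0) (h2 : z.2 ≠ 0) (p : ℤ × ℤ) : monom p z ≠ 0 :=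
  mul_ne_zero (zpow_ne_zero _ h1) (zpow_ne_zero _ h2)

theorem monom_sub {z : ℂ × ℂ} (h1 : z.1 ≠ 0) (h2 : z.2 ≠ 0) (p q : ℤ × ℤ) :
    monom (p - q) z = monom p z / monom q z := by
  simp only [monom, Prod.fst_sub, Prod.snd_sub, zpow_sub₀ h1, zpow_sub₀ h2]
  ring

theorem monom_smul (k : ℤ) (p : ℤ × ℤ) (z : ℂ × ℂ) : monom (k • p) z = monom p z ^ k := by
  simp only [monom, Prod.smul_fst, Prod.smul_snd, smul_eq_mul, mul_comm k, zpow_mul, mul_zpow]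

def binomialSolutions (p q : ℤ × ℤ) (β γ : ℂ) : Set (ℂ × ℂ) :=
  {z | z.1 ≠ 0 ∧ z.2 ≠ 0 ∧ monom p z = β ∧ monom q z = γ}

theorem binomialSolutions_comm (p q : ℤ × ℤ) (β γ : ℂ) :
    binomialSolutions p q β γ = binomialSolutions q p γ β := by
  ext z; simp only [binomialSolutions, mem_ofPred_eq]; tauto

theorem binomialSolutions_shear (p q : ℤ × ℤ) {β : ℂ} (γ : ℂ) (hβ : β ≠ 0) (k : ℤ) :
    binomialSolutions p q β γ = binomialSolutions p (q - k • p) β (γ / β ^ k) := by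
  ext z
  simp only [binomialSolutions, mem_ofPred_eq]
  refine ⟨fun ⟨h1, h2, hp, hq⟩ => ⟨h1, h2, hp, ?_⟩, fun ⟨h1, h2, hp, hq⟩ => ⟨h1, h2, hp, ?_⟩⟩
  · rw [monom_sub h1 h2, monom_smul, hp, hq]
  · rwa [monom_sub h1 h2, monom_smul, hp, div_left_inj' (zpow_ne_zero k hβ)] at hq

theorem encard_binomialSolutions_of_fst_eq_zero {p q : ℤ × ℤ} {β γ : ℂ} (hβ : β ≠ 0)
    (hγ : γ ≠ 0) (hp : p.1 = 0) (h : cross p q ≠ 0) :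
    (binomialSolutions p q β γ).encard = (cross p q).natAbs := by
  have hcross : cross p q = -(p.2 * q.1) := by simp [cross, hp]
  rw [hcross, neg_ne_zero, mul_ne_zero_iff] at h
  have hy0 : ∀ y : ℂ, y ^ p.2 = β → y ≠ 0 := by
    rintro y hy rfl
    exact hβ (by rw [← hy, zero_zpow _ h.1])
  have hfib : ∀ y ∈ {y : ℂ | y ^ p.2 = β},
      {x | (x, y) ∈ binomialSolutions p q β γ} = {x | x ^ q.1 = γ / y ^ q.2} := by
    intro y (hy : y ^ p.2 = β)
    ext x
    simp only [binomialSolutions, monom, hp, zpow_zero, one_mul, mem_ofPred_eq,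
      eq_div_iff (zpow_ne_zero _ (hy0 y hy))]
    refine ⟨fun ⟨_, _, _, hx⟩ => hx, fun hx => ⟨?_, hy0 y hy, hy, hx⟩⟩
    rintro rfl
    exact hγ (by rw [← hx, zero_zpow _ h.2, zero_mul])
  rw [encard_eq_encard_mul_of_fibers (t := {y : ℂ | y ^ p.2 = β})
      (finite_of_encard_eq_coe (encard_zpow_eq h.1 hβ))
      (fun z hz => by simpa [monom, hp] using hz.2.2.1)
      (fun y hy => by
        rw [hfib y hy, encard_zpow_eq h.2 (div_ne_zero hγ (zpow_ne_zero _ (hy0 y hy)))]),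
    encard_zpow_eq h.1 hβ, hcross, Int.natAbs_neg, Int.natAbs_mul, Nat.cast_mul]

theorem encard_binomialSolutions (p q : ℤ × ℤ) {β γ : ℂ} (hβ : β ≠ 0) (hγ : γ ≠ 0)
    (h : cross p q ≠ 0) : (binomialSolutions p q β γ).encard = (cross p q).natAbs := by
  by_cases hp : p.1 = 0
  · exact encard_binomialSolutions_of_fst_eq_zero hβ hγ hp h
  · have hcross : cross (q - (q.1 / p.1) • p) p = -cross p q := by
      simp only [cross, Prod.fst_sub, Prod.snd_sub, Prod.smul_fst, Prod.smul_snd, smul_eq_mul]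
      ring
    have hdecr : (q.1 - q.1 / p.1 * p.1).natAbs < p.1.natAbs := by
      have := Int.emod_lt q.1 hp
      have := Int.emod_nonneg q.1 hp
      rw [show q.1 - q.1 / p.1 * p.1 = q.1 % p.1 by rw [Int.emod_def]; ring]
      omega
    rw [binomialSolutions_shear p q γ hβ (q.1 / p.1), binomialSolutions_comm,
      encard_binomialSolutions _ p (div_ne_zero hγ (zpow_ne_zero _ hβ)) hβ
        (by rwa [hcross, neg_ne_zero]),
      hcross, Int.natAbs_neg]
termination_by p.1.natAbs
decreasing_by simpa using hdecr

open Filter Topology in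
theorem exists_neg_of_zero_mem_interior {E : Type*} [AddCommGroup E] [Module ℝ E]
    [TopologicalSpace E] [ContinuousSMul ℝ E] {S : Set E} (hS : (0 : E) ∈ interior S)
    {f : E →ₗ[ℝ] ℝ} (hf : f ≠ 0) : ∃ x ∈ S, f x < 0 := by
  obtain ⟨w, hw⟩ : ∃ w, f w ≠ 0 := by
    by_contra! h
    exact hf (LinearMap.ext h)
  set v := -f w • w
  have hv : f v < 0 := by simpa [v] using hw
  have hsmall : ∀ᶠ t : ℝ in 𝓝 0, t • v ∈ S := by
    have : Tendsto (fun t : ℝ => t • v) (𝓝 0) (𝓝 0) :=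
      (continuous_id.smul continuous_const).tendsto' 0 0 (zero_smul ℝ v)
    exact this (mem_interior_iff_mem_nhds.1 hS)
  obtain ⟨t, ht, htS⟩ := ((hsmall.filter_mono nhdsWithin_le_nhds).and
    self_mem_nhdsWithin).exists (f := 𝓝[>] (0 : ℝ))
  exact ⟨t • v, ht, by simpa using mul_neg_of_pos_of_neg htS hv⟩

theorem exists_neg_of_zero_mem_interior_convexHull {E : Type*} [AddCommGroup E] [Module ℝ E]
    [TopologicalSpace E] [ContinuousSMul ℝ E] {s : Set E}
    (hs : (0 : E) ∈ interior (convexHull ℝ s)) {f : E →ₗ[ℝ] ℝ} (hf : f ≠ 0) :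
    ∃ x ∈ s, f x < 0 := by
  by_contra! h
  obtain ⟨x, hx, hfx⟩ := exists_neg_of_zero_mem_interior hs hf
  exact not_lt.2 (convexHull_min h ((convex_Ici 0).linear_preimage f) hx) hfx

theorem exists_ne_zero_eq_zero_of_cross_eq_zero {P Q : ℝ × ℝ} (h : cross P Q = 0) :
    ∃ f : ℝ × ℝ →ₗ[ℝ] ℝ, f ≠ 0 ∧ f P = 0 ∧ f Q = 0 := by
  obtain ⟨v, hv, hPQ⟩ := Matrix.exists_mulVec_eq_zero_iff.2
    (show Matrix.det !![P.1, P.2; Q.1, Q.2] = 0 by rwa [Matrix.det_fin_two_of])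
  refine ⟨v 0 • LinearMap.fst ℝ ℝ ℝ + v 1 • LinearMap.snd ℝ ℝ ℝ, fun hf => hv ?_, ?_, ?_⟩
  · ext i
    fin_cases i
    · simpa using LinearMap.congr_fun hf (1, 0)
    · simpa using LinearMap.congr_fun hf (0, 1)
  · simpa [Matrix.mulVec, dotProduct, Fin.sum_univ_two, mul_comm] using congrFun hPQ 0
  · simpa [Matrix.mulVec, dotProduct, Fin.sum_univ_two, mul_comm] using congrFun hPQ 1

theorem exists_vertex_neg_of_zero_mem_interior_triangle {A B C : ℝ × ℝ}
    (h : (0 : ℝ × ℝ) ∈ interior (convexHull ℝ {A, B, C})) {f : ℝ × ℝ →ₗ[ℝ] ℝ} (hf : f ≠ 0) :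
    f A < 0 ∨ f B < 0 ∨ f C < 0 := by
  obtain ⟨x, hx, hfx⟩ := exists_neg_of_zero_mem_interior_convexHull h hf
  rcases hx with rfl | rfl | rfl
  exacts [Or.inl hfx, Or.inr (Or.inl hfx), Or.inr (Or.inr hfx)]

theorem cross_ne_zero_of_zero_mem_interior_triangle {A B C : ℝ × ℝ}
    (h : (0 : ℝ × ℝ) ∈ interior (convexHull ℝ {A, B, C})) :
    cross A B ≠ 0 := by
  intro hAB
  obtain ⟨f, hf, hA, hB⟩ := exists_ne_zero_eq_zero_of_cross_eq_zero hAB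
  have hpos := exists_vertex_neg_of_zero_mem_interior_triangle h hf
  have hneg := exists_vertex_neg_of_zero_mem_interior_triangle h (neg_ne_zero.2 hf)
  simp only [LinearMap.neg_apply, hA, hB, lt_irrefl, neg_zero, false_or, neg_lt_zero] at hpos hneg
  linarith

theorem cross_sub_ne_zero_of_zero_mem_interior_triangle {A B C : ℝ × ℝ}
    (h : (0 : ℝ × ℝ) ∈ interior (convexHull ℝ {A, B, C})) :
    cross (B - A) (C - A) ≠ 0 := by
  intro hABC
  obtain ⟨f, hf, hB, hC⟩ := exists_ne_zero_eq_zero_of_cross_eq_zero hABC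
  rw [map_sub, sub_eq_zero] at hB hC
  have hpos := exists_vertex_neg_of_zero_mem_interior_triangle h hf
  have hneg := exists_vertex_neg_of_zero_mem_interior_triangle h (neg_ne_zero.2 hf)
  simp only [LinearMap.neg_apply, hB, hC, or_self, neg_lt_zero] at hpos hneg
  linarith

def laurentPoly {ι : Type*} [Fintype ι] (c : ι → ℂ) (v : ι → ℤ × ℤ) (z : ℂ × ℂ) : ℂ :=
  ∑ i, c i * monom (v i) z

section laurentPoly

variable {ι : Type*} [Fintype ι] (c : ι → ℂ) (v : ι → ℤ × ℤ)

theorem laurentPoly_swap (x y : ℂ) :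
    laurentPoly c (fun i => (v i).swap) (x, y) = laurentPoly c v (y, x) :=
  Finset.sum_congr rfl fun i _ => by simp only [monom, Prod.fst_swap, Prod.snd_swap]; ring

theorem hasDerivAt_laurentPoly_fst (y : ℂ) {x : ℂ} (hx : x ≠ 0) :
    HasDerivAt (fun w => laurentPoly c v (w, y))
      (laurentPoly (fun i => (v i).1 * c i) v (x, y) / x) x := by
  have := HasDerivAt.fun_sum (u := Finset.univ) fun i _ =>
    (((hasDerivAt_zpow (v i).1 x (Or.inl hx)).mul_const (y ^ (v i).2)).const_mul (c i))
  refine this.congr_deriv ?_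
  simp only [laurentPoly, monom, Finset.sum_div]
  refine Finset.sum_congr rfl fun i _ => ?_
  rw [zpow_sub_one₀ hx]
  field_simp

theorem hasDerivAt_laurentPoly_snd (x : ℂ) {y : ℂ} (hy : y ≠ 0) :
    HasDerivAt (fun w => laurentPoly c v (x, w))
      (laurentPoly (fun i => (v i).2 * c i) v (x, y) / y) y := by
  simpa only [laurentPoly_swap, Prod.fst_swap] using
    hasDerivAt_laurentPoly_fst c (fun i => (v i).swap) x hy

open Filter Topology in
theorem hasDerivAt_deriv_laurentPoly_fst (y : ℂ) {x : ℂ} (hx : x ≠ 0) :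
    HasDerivAt (deriv fun w => laurentPoly c v (w, y))
      ((laurentPoly (fun i => (v i).1 * (v i).1 * c i) v (x, y) -
        laurentPoly (fun i => (v i).1 * c i) v (x, y)) / x ^ 2) x := by
  have hderiv : (deriv fun w => laurentPoly c v (w, y)) =ᶠ[𝓝 x]
      fun w => laurentPoly (fun i => (v i).1 * c i) v (w, y) / w := by
    filter_upwards [isOpen_ne.mem_nhds hx] with w hw
    exact (hasDerivAt_laurentPoly_fst c v y hw).deriv
  refine (((hasDerivAt_laurentPoly_fst _ v y hx).div (hasDerivAt_id x) hx).congr_of_eventuallyEq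
    hderiv).congr_deriv ?_
  rw [id, mul_one, div_mul_cancel₀ _ hx]
  simp only [mul_assoc]

theorem hasDerivAt_deriv_laurentPoly_snd (x : ℂ) {y : ℂ} (hy : y ≠ 0) :
    HasDerivAt (deriv fun w => laurentPoly c v (x, w))
      ((laurentPoly (fun i => (v i).2 * (v i).2 * c i) v (x, y) -
        laurentPoly (fun i => (v i).2 * c i) v (x, y)) / y ^ 2) y := by
  simpa only [laurentPoly_swap, Prod.fst_swap] using
    hasDerivAt_deriv_laurentPoly_fst c (fun i => (v i).swap) x hy

theorem deriv_deriv_laurentPoly_fst_snd {x y : ℂ} (hx : x ≠ 0) (hy : y ≠ 0) :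
    deriv (fun w₂ => deriv (fun w₁ => laurentPoly c v (w₁, w₂)) x) y =
      laurentPoly (fun i => (v i).1 * (v i).2 * c i) v (x, y) / (x * y) := by
  have hinner : (fun w₂ => deriv (fun w₁ => laurentPoly c v (w₁, w₂)) x) =
      fun w₂ => laurentPoly (fun i => (v i).1 * c i) v (x, w₂) / x :=
    funext fun w₂ => (hasDerivAt_laurentPoly_fst c v w₂ hx).deriv
  rw [hinner, ((hasDerivAt_laurentPoly_snd _ v x hy).div_const x).deriv, div_div, mul_comm y]
  simp only [mul_left_comm ((v _).2 : ℂ), mul_assoc]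

theorem deriv_deriv_laurentPoly_snd_fst {x y : ℂ} (hx : x ≠ 0) (hy : y ≠ 0) :
    deriv (fun w₁ => deriv (fun w₂ => laurentPoly c v (w₁, w₂)) y) x =
      laurentPoly (fun i => (v i).1 * (v i).2 * c i) v (x, y) / (x * y) := by
  have := deriv_deriv_laurentPoly_fst_snd c (fun i => (v i).swap) hy hx
  simp only [laurentPoly_swap, Prod.fst_swap, Prod.snd_swap] at this
  rw [this, mul_comm y]
  congr 2
  funext i
  ring

theorem isCritPt_laurentPoly_iff (z : ℂ × ℂ) :
    IsCritPt (laurentPoly c v) z ↔ z.1 ≠ 0 ∧ z.2 ≠ 0 ∧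
      laurentPoly (fun i => (v i).1 * c i) v z = 0 ∧
      laurentPoly (fun i => (v i).2 * c i) v z = 0 := by
  refine and_congr_right fun h1 => and_congr_right fun h2 => ?_
  rw [(hasDerivAt_laurentPoly_fst c v z.2 h1).deriv, (hasDerivAt_laurentPoly_snd c v z.1 h2).deriv,
    div_eq_zero_iff, div_eq_zero_iff, or_iff_left h1, or_iff_left h2]

theorem hessDet_laurentPoly_of_isCritPt {z : ℂ × ℂ} (hz : IsCritPt (laurentPoly c v) z) :
    hessDet (laurentPoly c v) z =
      (laurentPoly (fun i => (v i).1 * (v i).1 * c i) v z *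
          laurentPoly (fun i => (v i).2 * (v i).2 * c i) v z -
        laurentPoly (fun i => (v i).1 * (v i).2 * c i) v z ^ 2) / (z.1 * z.2) ^ 2 := by
  obtain ⟨h1, h2, e1, e2⟩ := (isCritPt_laurentPoly_iff c v z).1 hz
  rw [hessDet, (hasDerivAt_deriv_laurentPoly_fst c v z.2 h1).deriv,
    (hasDerivAt_deriv_laurentPoly_snd c v z.1 h2).deriv, deriv_deriv_laurentPoly_fst_snd c v h1 h2,
    deriv_deriv_laurentPoly_snd_fst c v h1 h2, e1, e2]
  field_simp
  ring

end laurentPoly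

theorem dot_eq_zero_iff_exists_eq_mul_cross {K : Type*} [Field K] (a b c : ℤ × ℤ) {u₁ u₂ u₃ : K}
    (h : ((cross a b : ℤ) : K) ≠ 0) :
    (a.1 * u₁ + b.1 * u₂ + c.1 * u₃ = 0 ∧ a.2 * u₁ + b.2 * u₂ + c.2 * u₃ = 0) ↔
      ∃ t : K, u₁ = t * (cross b c : ℤ) ∧ u₂ = t * (cross c a : ℤ) ∧ u₃ = t * (cross a b : ℤ) := by
  constructor
  · rintro ⟨hx, hy⟩
    refine ⟨u₃ / cross a b, ?_, ?_, by field_simp⟩ <;> field_simp <;> push_cast [cross]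
    · linear_combination b.2 * hx - b.1 * hy
    · linear_combination a.1 * hy - a.2 * hx
  · rintro ⟨t, rfl, rfl, rfl⟩
    push_cast [cross]
    constructor <;> ring

theorem trinom_eq_laurentPoly (a b c : ℤ × ℤ) (α₁ α₂ α₃ : ℂ) :
    trinom a b c α₁ α₂ α₃ = laurentPoly ![α₁, α₂, α₃] ![a, b, c] := by
  funext z
  simp [trinom, laurentPoly, monom, Fin.sum_univ_three]
  ring

section trinom

variable (a b c : ℤ × ℤ) (α₁ α₂ α₃ : ℂ)

theorem isCritPt_trinom_iff (z : ℂ × ℂ) :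
    IsCritPt (trinom a b c α₁ α₂ α₃) z ↔ z.1 ≠ 0 ∧ z.2 ≠ 0 ∧
      a.1 * (α₁ * monom a z) + b.1 * (α₂ * monom b z) + c.1 * (α₃ * monom c z) = 0 ∧
      a.2 * (α₁ * monom a z) + b.2 * (α₂ * monom b z) + c.2 * (α₃ * monom c z) = 0 := by
  rw [trinom_eq_laurentPoly, isCritPt_laurentPoly_iff]
  simp [laurentPoly, Fin.sum_univ_three, mul_assoc]

theorem setOf_isCritPt_trinom (h₁ : α₁ ≠ 0) (h₂ : α₂ ≠ 0) (hab : cross a b ≠ 0) :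
    {z | IsCritPt (trinom a b c α₁ α₂ α₃) z} =
      binomialSolutions (a - c) (b - c) (cross b c * α₃ / (cross a b * α₁))
        (cross c a * α₃ / (cross a b * α₂)) := by
  have hab' : ((cross a b : ℤ) : ℂ) ≠ 0 := by exact_mod_cast hab
  ext z
  simp only [mem_ofPred_eq, isCritPt_trinom_iff, binomialSolutions]
  refine and_congr_right fun hz1 => and_congr_right fun hz2 => ?_
  rw [dot_eq_zero_iff_exists_eq_mul_cross a b c hab', monom_sub hz1 hz2, monom_sub hz1 hz2,
    div_eq_div_iff (monom_ne_zero hz1 hz2 c) (mul_ne_zero hab' h₁),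
    div_eq_div_iff (monom_ne_zero hz1 hz2 c) (mul_ne_zero hab' h₂)]
  constructor
  · rintro ⟨t, hu₁, hu₂, hu₃⟩
    constructor
    · linear_combination ((cross a b : ℤ) : ℂ) * hu₁ - ((cross b c : ℤ) : ℂ) * hu₃
    · linear_combination ((cross a b : ℤ) : ℂ) * hu₂ - ((cross c a : ℤ) : ℂ) * hu₃
  · rintro ⟨hβ, hγ⟩
    refine ⟨α₃ * monom c z / cross a b, ?_, ?_, by field_simp⟩ <;> field_simp
    · linear_combination hβ
    · linear_combination hγ

theorem hessDet_trinom_ne_zero (h₃ : α₃ ≠ 0) (hab : cross a b ≠ 0) (hbc : cross b c ≠ 0)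
    (hca : cross c a ≠ 0) (habc : cross (b - a) (c - a) ≠ 0) {z : ℂ × ℂ}
    (hz : IsCritPt (trinom a b c α₁ α₂ α₃) z) : hessDet (trinom a b c α₁ α₂ α₃) z ≠ 0 := by
  obtain ⟨hz1, hz2, hx, hy⟩ := (isCritPt_trinom_iff a b c α₁ α₂ α₃ z).1 hz
  obtain ⟨t, hu₁, hu₂, hu₃⟩ :=
    (dot_eq_zero_iff_exists_eq_mul_cross a b c (by exact_mod_cast hab)).1 ⟨hx, hy⟩
  have ht : t ≠ 0 := by
    rintro rfl
    exact mul_ne_zero h₃ (monom_ne_zero hz1 hz2 c) (by simpa using hu₃)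
  rw [trinom_eq_laurentPoly] at hz ⊢
  rw [hessDet_laurentPoly_of_isCritPt _ _ hz]
  simp only [laurentPoly, Fin.sum_univ_three, Fin.isValue, Matrix.cons_val_zero,
    Matrix.cons_val_one, Matrix.cons_val, mul_assoc]
  rw [hu₁, hu₂, hu₃]
  refine div_ne_zero ?_ (pow_ne_zero 2 (mul_ne_zero hz1 hz2))
  -- Lagrange's identity `(∑ xᵢ² uᵢ)(∑ yᵢ² uᵢ) - (∑ xᵢ yᵢ uᵢ)² = ∑_{i<j} uᵢ uⱼ (xᵢ yⱼ - xⱼ yᵢ)²`,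
  -- evaluated at `u = t • (cross b c, cross c a, cross a b)`
  convert mul_ne_zero (pow_ne_zero 2 ht) (Int.cast_ne_zero.2
    (mul_ne_zero (mul_ne_zero (mul_ne_zero hbc hca) hab) habc)) using 1
  push_cast [cross, Prod.fst_sub, Prod.snd_sub]
  ring

end trinom

theorem cross_toR2 (p q : ℤ × ℤ) : cross (toR2 p) (toR2 q) = ((cross p q : ℤ) : ℝ) := by
  simp [cross, toR2]

theorem toR2_sub (p q : ℤ × ℤ) : toR2 p - toR2 q = toR2 (p - q) := by
  simp [toR2]

theorem cross_ne_zero_of_origin_mem_interior {a b c : ℤ × ℤ}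
    (h : ((0 : ℝ), (0 : ℝ)) ∈ interior (convexHull ℝ {toR2 a, toR2 b, toR2 c})) :
    cross a b ≠ 0 ∧ cross b c ≠ 0 ∧ cross c a ≠ 0 ∧ cross (b - a) (c - a) ≠ 0 := by
  refine ⟨?_, ?_, ?_, ?_⟩ <;> rw [← Int.cast_ne_zero (α := ℝ), ← cross_toR2]
  · exact cross_ne_zero_of_zero_mem_interior_triangle h
  · exact cross_ne_zero_of_zero_mem_interior_triangle (C := toR2 a)
      (by rwa [pair_comm, insert_comm])
  · exact cross_ne_zero_of_zero_mem_interior_triangle (C := toR2 b)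
      (by rwa [insert_comm, pair_comm])
  · rw [← toR2_sub, ← toR2_sub]
    exact cross_sub_ne_zero_of_zero_mem_interior_triangle h

theorem trinomial_critical_points
    (a b c : ℤ × ℤ) (α1 α2 α3 : ℂ) (h1 : α1 ≠ 0) (h2 : α2 ≠ 0) (h3 : α3 ≠ 0)
    (horigin : ((0 : ℝ), (0 : ℝ)) ∈ interior (convexHull ℝ {toR2 a, toR2 b, toR2 c})) :
    {z : ℂ × ℂ | IsCritPt (trinom a b c α1 α2 α3) z}.Finite ∧
    {z : ℂ × ℂ | IsCritPt (trinom a b c α1 α2 α3) z}.ncard =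
      (Matrix.det !![b.1 - a.1, c.1 - a.1; b.2 - a.2, c.2 - a.2]).natAbs ∧
    ∀ z : ℂ × ℂ, IsCritPt (trinom a b c α1 α2 α3) z →
      hessDet (trinom a b c α1 α2 α3) z ≠ 0 := by
  obtain ⟨hab, hbc, hca, habc⟩ := cross_ne_zero_of_origin_mem_interior horigin
  have hdet :
      Matrix.det !![b.1 - a.1, c.1 - a.1; b.2 - a.2, c.2 - a.2] = cross (b - a) (c - a) := by
    rw [Matrix.det_fin_two_of, cross, Prod.fst_sub, Prod.snd_sub, Prod.fst_sub, Prod.snd_sub]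
    ring
  have hshift : cross (a - c) (b - c) = cross (b - a) (c - a) := by
    simp only [cross, Prod.fst_sub, Prod.snd_sub]
    ring
  have hab' : ((cross a b : ℤ) : ℂ) ≠ 0 := Int.cast_ne_zero.2 hab
  have hcount := encard_binomialSolutions (a - c) (b - c)
    (div_ne_zero (mul_ne_zero (Int.cast_ne_zero.2 hbc) h3) (mul_ne_zero hab' h1))
    (div_ne_zero (mul_ne_zero (Int.cast_ne_zero.2 hca) h3) (mul_ne_zero hab' h2)) (hshift ▸ habc)
  rw [setOf_isCritPt_trinom a b c α1 α2 α3 h1 h2 hab, hdet, ← hshift]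
  exact ⟨finite_of_encard_eq_coe hcount, by rw [ncard_def, hcount, ENat.toNat_natCast],
    fun z hz => hessDet_trinom_ne_zero a b c α1 α2 α3 h3 hab hbc hca habc hz⟩

end
end

section
/- There exist 8 points p₁, …, p₈ ∈ (ℂ ∖ {0})³ such that the set of one-dimensional linear subspaces ℂ·f of the space of polynomials, where f ∈ ℂ[x,y,z] is a nonzero polynomial of total degree at most 2 with f(pᵢ) = 0 for all i = 1, …, 8 and f has a singular point in (ℂ ∖ {0})³, is finite of cardinality exactly 4. -/
open MvPolynomial

noncomputable section

/-- The set of lines `ℂ·f` spanned by nonzero polynomials of total degree at most `d`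
vanishing at the given points and having a singular point in the torus. -/
def singularLines {n : ℕ} (pts : Fin n → Fin 3 → ℂ) (d : ℕ) :
    Set (Submodule ℂ (MvPolynomial (Fin 3) ℂ)) :=
  {L | ∃ f : MvPolynomial (Fin 3) ℂ, f ≠ 0 ∧ L = Submodule.span ℂ {f} ∧
    f.totalDegree ≤ d ∧ (∀ i, eval (pts i) f = 0) ∧ ∃ p : Fin 3 → ℂ, SingularAt3 f p}

namespace QDD

def E (a b c : ℕ) : Fin 3 →₀ ℕ := Finsupp.single 0 a + Finsupp.single 1 b + Finsupp.single 2 c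

lemma E_apply0 (a b c : ℕ) : E a b c 0 = a := by simp [E, Finsupp.single_apply]
lemma E_apply1 (a b c : ℕ) : E a b c 1 = b := by simp [E, Finsupp.single_apply]
lemma E_apply2 (a b c : ℕ) : E a b c 2 = c := by simp [E, Finsupp.single_apply]

lemma eq_E_iff (m : Fin 3 →₀ ℕ) (a b c : ℕ) : m = E a b c ↔ m 0 = a ∧ m 1 = b ∧ m 2 = c := by
  constructor
  · rintro rfl; exact ⟨E_apply0 a b c, E_apply1 a b c, E_apply2 a b c⟩
  · rintro ⟨h0, h1, h2⟩
    ext i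
    fin_cases i <;> simp [h0, h1, h2, E, Finsupp.single_apply]

lemma E_eq_E_iff (a b c a' b' c' : ℕ) : E a b c = E a' b' c' ↔ a = a' ∧ b = b' ∧ c = c' := by
  rw [eq_E_iff, E_apply0, E_apply1, E_apply2]

lemma mon_form (a b c : ℕ) (r : ℂ) :
    C r * X 0 ^ a * X 1 ^ b * X 2 ^ c = (monomial (E a b c) r : MvPolynomial (Fin 3) ℂ) := by
  simp [E, X_pow_eq_monomial, monomial_mul, C_mul_monomial]

lemma sum_fin3 (m : Fin 3 →₀ ℕ) : m.sum (fun _ e => e) = m 0 + m 1 + m 2 := by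
  rw [Finsupp.sum_fintype]
  · simp [Fin.sum_univ_three]
  · intro; rfl

lemma expand (f : MvPolynomial (Fin 3) ℂ) (hf : f.totalDegree ≤ 2) :
    f = C (coeff (E 0 0 0) f) * X 0 ^ 0 * X 1 ^ 0 * X 2 ^ 0
      + C (coeff (E 1 0 0) f) * X 0 ^ 1 * X 1 ^ 0 * X 2 ^ 0
      + C (coeff (E 0 1 0) f) * X 0 ^ 0 * X 1 ^ 1 * X 2 ^ 0
      + C (coeff (E 0 0 1) f) * X 0 ^ 0 * X 1 ^ 0 * X 2 ^ 1
      + C (coeff (E 2 0 0) f) * X 0 ^ 2 * X 1 ^ 0 * X 2 ^ 0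
      + C (coeff (E 0 2 0) f) * X 0 ^ 0 * X 1 ^ 2 * X 2 ^ 0
      + C (coeff (E 0 0 2) f) * X 0 ^ 0 * X 1 ^ 0 * X 2 ^ 2
      + C (coeff (E 1 1 0) f) * X 0 ^ 1 * X 1 ^ 1 * X 2 ^ 0
      + C (coeff (E 1 0 1) f) * X 0 ^ 1 * X 1 ^ 0 * X 2 ^ 1
      + C (coeff (E 0 1 1) f) * X 0 ^ 0 * X 1 ^ 1 * X 2 ^ 1 := by
  have hs : ∀ m ∈ f.support, m 0 + m 1 + m 2 ≤ 2 := by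
    intro m hm
    rw [← sum_fin3]
    exact le_trans (MvPolynomial.le_totalDegree hm) hf
  rw [MvPolynomial.ext_iff]
  intro m
  simp only [coeff_add, mon_form, coeff_monomial]
  by_cases hm : m 0 + m 1 + m 2 ≤ 2
  · obtain ⟨a, b, c, rfl⟩ : ∃ a b c, m = E a b c :=
      ⟨m 0, m 1, m 2, (eq_E_iff m _ _ _).mpr ⟨rfl, rfl, rfl⟩⟩
    rw [E_apply0, E_apply1, E_apply2] at hm
    have ha : a ≤ 2 := by omega
    have hb : b ≤ 2 := by omega
    have hc : c ≤ 2 := by omega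
    interval_cases a <;> interval_cases b <;> interval_cases c <;> simp_all [E_eq_E_iff]
  · have hz : coeff m f = 0 := by
      by_contra h
      exact hm (hs m (mem_support_iff.mpr h))
    rw [hz]
    have hne : ∀ a b c : ℕ, a + b + c ≤ 2 → E a b c ≠ m := by
      intro a b c h hEq
      rw [eq_comm, eq_E_iff] at hEq
      omega
    rw [if_neg (hne 0 0 0 (by omega)), if_neg (hne 1 0 0 (by omega)),
        if_neg (hne 0 1 0 (by omega)), if_neg (hne 0 0 1 (by omega)),
        if_neg (hne 2 0 0 (by omega)), if_neg (hne 0 2 0 (by omega)),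
        if_neg (hne 0 0 2 (by omega)), if_neg (hne 1 1 0 (by omega)),
        if_neg (hne 1 0 1 (by omega)), if_neg (hne 0 1 1 (by omega))]
    simp

def Q0 : MvPolynomial (Fin 3) ℂ := X 0 ^ 2 + X 1 ^ 2 + X 2 ^ 2 + 1
def Q1 : MvPolynomial (Fin 3) ℂ :=
  C (-2) * X 0 ^ 2 + C (-2) * X 1 ^ 2 + C (-2) * X 2 ^ 2
  + C (-14) * (X 0 * X 1) + C (-10) * (X 0 * X 2) + C 6 * (X 1 * X 2)
  + C 6 * X 0 + C (-10) * X 1 + C (-14) * X 2 + C (-2)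

def G (k : ℂ) : MvPolynomial (Fin 3) ℂ := C k * Q0 + Q1

def pt1 : Fin 3 → ℂ := ![((-1) : ℂ) * Complex.I, ((-1/3) : ℂ) * Complex.I, ((1/3) : ℂ)]
def pt2 : Fin 3 → ℂ := ![((-1) : ℂ) * Complex.I, ((-3) : ℂ) * Complex.I, (3 : ℂ)]
def pt3 : Fin 3 → ℂ := ![(1 : ℂ) * Complex.I, (3 : ℂ) * Complex.I, (3 : ℂ)]
def pt4 : Fin 3 → ℂ := ![(1 : ℂ) * Complex.I, ((1/3) : ℂ) * Complex.I, ((1/3) : ℂ)]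
def pt5 : Fin 3 → ℂ := ![((-4/5) : ℂ) + ((-3/5)) * Complex.I, ((-1) : ℂ) * Complex.I, ((3/5) : ℂ) + ((-4/5)) * Complex.I]
def pt6 : Fin 3 → ℂ := ![((4/5) : ℂ) + ((3/5)) * Complex.I, (1 : ℂ) * Complex.I, ((3/5) : ℂ) + ((-4/5)) * Complex.I]
def pt7 : Fin 3 → ℂ := ![((4/5) : ℂ) + ((-3/5)) * Complex.I, ((-1) : ℂ) * Complex.I, ((3/5) : ℂ) + ((4/5)) * Complex.I]
def pt8 : Fin 3 → ℂ := ![((-2236/2525) : ℂ) + ((-1173/2525)) * Complex.I, ((672/505) : ℂ) + ((-559/505)) * Complex.I, ((-1677/2525) : ℂ) + ((-4036/2525)) * Complex.I]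
def Pm : Fin 8 → Fin 3 → ℂ := ![pt1, pt2, pt3, pt4, pt5, pt6, pt7, pt8]

lemma hQ0pt1 : eval pt1 Q0 = 0 := by
  simp only [Q0, pt1, map_add, map_mul, map_pow, eval_C, eval_X, map_one, map_zero, Matrix.cons_val_zero, Matrix.cons_val_one, Matrix.head_cons, Matrix.cons_val_two, Matrix.tail_cons, Fin.isValue]
  linear_combination (((10/9):ℂ)) * Complex.I_sq
lemma hQ1pt1 : eval pt1 Q1 = 0 := by
  simp only [Q1, pt1, map_add, map_mul, map_pow, eval_C, eval_X, map_one, map_zero, Matrix.cons_val_zero, Matrix.cons_val_one, Matrix.head_cons, Matrix.cons_val_two, Matrix.tail_cons, Fin.isValue]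
  linear_combination (((-62/9):ℂ)) * Complex.I_sq
lemma hQ0pt2 : eval pt2 Q0 = 0 := by
  simp only [Q0, pt2, map_add, map_mul, map_pow, eval_C, eval_X, map_one, map_zero, Matrix.cons_val_zero, Matrix.cons_val_one, Matrix.head_cons, Matrix.cons_val_two, Matrix.tail_cons, Fin.isValue]
  linear_combination ((10:ℂ)) * Complex.I_sq
lemma hQ1pt2 : eval pt2 Q1 = 0 := by
  simp only [Q1, pt2, map_add, map_mul, map_pow, eval_C, eval_X, map_one, map_zero, Matrix.cons_val_zero, Matrix.cons_val_one, Matrix.head_cons, Matrix.cons_val_two, Matrix.tail_cons, Fin.isValue]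
  linear_combination ((-62:ℂ)) * Complex.I_sq
lemma hQ0pt3 : eval pt3 Q0 = 0 := by
  simp only [Q0, pt3, map_add, map_mul, map_pow, eval_C, eval_X, map_one, map_zero, Matrix.cons_val_zero, Matrix.cons_val_one, Matrix.head_cons, Matrix.cons_val_two, Matrix.tail_cons, Fin.isValue]
  linear_combination ((10:ℂ)) * Complex.I_sq
lemma hQ1pt3 : eval pt3 Q1 = 0 := by
  simp only [Q1, pt3, map_add, map_mul, map_pow, eval_C, eval_X, map_one, map_zero, Matrix.cons_val_zero, Matrix.cons_val_one, Matrix.head_cons, Matrix.cons_val_two, Matrix.tail_cons, Fin.isValue]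
  linear_combination ((-62:ℂ)) * Complex.I_sq
lemma hQ0pt4 : eval pt4 Q0 = 0 := by
  simp only [Q0, pt4, map_add, map_mul, map_pow, eval_C, eval_X, map_one, map_zero, Matrix.cons_val_zero, Matrix.cons_val_one, Matrix.head_cons, Matrix.cons_val_two, Matrix.tail_cons, Fin.isValue]
  linear_combination (((10/9):ℂ)) * Complex.I_sq
lemma hQ1pt4 : eval pt4 Q1 = 0 := by
  simp only [Q1, pt4, map_add, map_mul, map_pow, eval_C, eval_X, map_one, map_zero, Matrix.cons_val_zero, Matrix.cons_val_one, Matrix.head_cons, Matrix.cons_val_two, Matrix.tail_cons, Fin.isValue]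
  linear_combination (((-62/9):ℂ)) * Complex.I_sq
lemma hQ0pt5 : eval pt5 Q0 = 0 := by
  simp only [Q0, pt5, map_add, map_mul, map_pow, eval_C, eval_X, map_one, map_zero, Matrix.cons_val_zero, Matrix.cons_val_one, Matrix.head_cons, Matrix.cons_val_two, Matrix.tail_cons, Fin.isValue]
  linear_combination ((2:ℂ)) * Complex.I_sq
lemma hQ1pt5 : eval pt5 Q1 = 0 := by
  simp only [Q1, pt5, map_add, map_mul, map_pow, eval_C, eval_X, map_one, map_zero, Matrix.cons_val_zero, Matrix.cons_val_one, Matrix.head_cons, Matrix.cons_val_two, Matrix.tail_cons, Fin.isValue]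
  linear_combination (((-62/5):ℂ)) * Complex.I_sq
lemma hQ0pt6 : eval pt6 Q0 = 0 := by
  simp only [Q0, pt6, map_add, map_mul, map_pow, eval_C, eval_X, map_one, map_zero, Matrix.cons_val_zero, Matrix.cons_val_one, Matrix.head_cons, Matrix.cons_val_two, Matrix.tail_cons, Fin.isValue]
  linear_combination ((2:ℂ)) * Complex.I_sq
lemma hQ1pt6 : eval pt6 Q1 = 0 := by
  simp only [Q1, pt6, map_add, map_mul, map_pow, eval_C, eval_X, map_one, map_zero, Matrix.cons_val_zero, Matrix.cons_val_one, Matrix.head_cons, Matrix.cons_val_two, Matrix.tail_cons, Fin.isValue]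
  linear_combination (((-62/5):ℂ)) * Complex.I_sq
lemma hQ0pt7 : eval pt7 Q0 = 0 := by
  simp only [Q0, pt7, map_add, map_mul, map_pow, eval_C, eval_X, map_one, map_zero, Matrix.cons_val_zero, Matrix.cons_val_one, Matrix.head_cons, Matrix.cons_val_two, Matrix.tail_cons, Fin.isValue]
  linear_combination ((2:ℂ)) * Complex.I_sq
lemma hQ1pt7 : eval pt7 Q1 = 0 := by
  simp only [Q1, pt7, map_add, map_mul, map_pow, eval_C, eval_X, map_one, map_zero, Matrix.cons_val_zero, Matrix.cons_val_one, Matrix.head_cons, Matrix.cons_val_two, Matrix.tail_cons, Fin.isValue]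
  linear_combination (((-62/5):ℂ)) * Complex.I_sq
lemma hQ0pt8 : eval pt8 Q0 = 0 := by
  simp only [Q0, pt8, map_add, map_mul, map_pow, eval_C, eval_X, map_one, map_zero, Matrix.cons_val_zero, Matrix.cons_val_one, Matrix.head_cons, Matrix.cons_val_two, Matrix.tail_cons, Fin.isValue]
  linear_combination (((2018/505):ℂ)) * Complex.I_sq
lemma hQ1pt8 : eval pt8 Q1 = 0 := by
  simp only [Q1, pt8, map_add, map_mul, map_pow, eval_C, eval_X, map_one, map_zero, Matrix.cons_val_zero, Matrix.cons_val_one, Matrix.head_cons, Matrix.cons_val_two, Matrix.tail_cons, Fin.isValue]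
  linear_combination (((-30302/2525):ℂ)) * Complex.I_sq

lemma hQ0P : ∀ i, eval (Pm i) Q0 = 0 := by
  intro i
  fin_cases i
  exacts [hQ0pt1, hQ0pt2, hQ0pt3, hQ0pt4, hQ0pt5, hQ0pt6, hQ0pt7, hQ0pt8]
lemma hQ1P : ∀ i, eval (Pm i) Q1 = 0 := by
  intro i
  fin_cases i
  exacts [hQ1pt1, hQ1pt2, hQ1pt3, hQ1pt4, hQ1pt5, hQ1pt6, hQ1pt7, hQ1pt8]

lemma deg2_add {p q : MvPolynomial (Fin 3) ℂ} (hp : p.totalDegree ≤ 2)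
    (hq : q.totalDegree ≤ 2) : (p + q).totalDegree ≤ 2 :=
  le_trans (totalDegree_add _ _) (max_le hp hq)
lemma deg2_Cmul {p : MvPolynomial (Fin 3) ℂ} (r : ℂ) (hp : p.totalDegree ≤ 2) :
    (C r * p).totalDegree ≤ 2 :=
  le_trans (totalDegree_mul _ _) (by simp only [totalDegree_C, zero_add]; exact hp)
lemma degXsq (i : Fin 3) : ((X i : MvPolynomial (Fin 3) ℂ) ^ 2).totalDegree ≤ 2 := by
  rw [totalDegree_X_pow]
lemma degXX (i j : Fin 3) : ((X i : MvPolynomial (Fin 3) ℂ) * X j).totalDegree ≤ 2 :=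
  le_trans (totalDegree_mul _ _) (by simp [totalDegree_X])
lemma degX (i : Fin 3) : (X i : MvPolynomial (Fin 3) ℂ).totalDegree ≤ 2 := by
  simp [totalDegree_X]
lemma degC (r : ℂ) : (C r : MvPolynomial (Fin 3) ℂ).totalDegree ≤ 2 := by
  simp [totalDegree_C]
lemma degQ0 : Q0.totalDegree ≤ 2 := by
  refine deg2_add (deg2_add (deg2_add (degXsq 0) (degXsq 1)) (degXsq 2)) ?_
  rw [show (1 : MvPolynomial (Fin 3) ℂ) = C 1 from (map_one C).symm]
  exact degC 1
lemma degQ1 : Q1.totalDegree ≤ 2 :=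
  deg2_add (deg2_add (deg2_add (deg2_add (deg2_add (deg2_add (deg2_add (deg2_add
    (deg2_add (deg2_Cmul _ (degXsq 0)) (deg2_Cmul _ (degXsq 1))) (deg2_Cmul _ (degXsq 2)))
    (deg2_Cmul _ (degXX 0 1))) (deg2_Cmul _ (degXX 0 2))) (deg2_Cmul _ (degXX 1 2)))
    (deg2_Cmul _ (degX 0))) (deg2_Cmul _ (degX 1))) (deg2_Cmul _ (degX 2))) (degC (-2))
lemma degG (k : ℂ) : (G k).totalDegree ≤ 2 := deg2_add (deg2_Cmul _ degQ0) degQ1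

lemma hGP (k : ℂ) : ∀ i, eval (Pm i) (G k) = 0 := by
  intro i
  have h0 := hQ0P i
  have h1 := hQ1P i
  simp only [G, map_add, map_mul, eval_C, h0, h1, mul_zero, add_zero]

lemma stepA (f : MvPolynomial (Fin 3) ℂ) (hdeg : f.totalDegree ≤ 2)
    (hv : ∀ i, eval (Pm i) f = 0) : ∃ a b : ℂ, f = C a * Q0 + C b * Q1 := by
  have hexp := expand f hdeg
  have E1 := hv 0
  rw [show Pm 0 = pt1 from rfl, hexp] at E1
  simp only [pt1, map_add, map_mul, map_pow, eval_C, eval_X, map_one, map_zero, Matrix.cons_val_zero, Matrix.cons_val_one, Matrix.head_cons, Matrix.cons_val_two, Matrix.tail_cons, Fin.isValue] at E1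
  have E2 := hv 1
  rw [show Pm 1 = pt2 from rfl, hexp] at E2
  simp only [pt2, map_add, map_mul, map_pow, eval_C, eval_X, map_one, map_zero, Matrix.cons_val_zero, Matrix.cons_val_one, Matrix.head_cons, Matrix.cons_val_two, Matrix.tail_cons, Fin.isValue] at E2
  have E3 := hv 2
  rw [show Pm 2 = pt3 from rfl, hexp] at E3
  simp only [pt3, map_add, map_mul, map_pow, eval_C, eval_X, map_one, map_zero, Matrix.cons_val_zero, Matrix.cons_val_one, Matrix.head_cons, Matrix.cons_val_two, Matrix.tail_cons, Fin.isValue] at E3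
  have E4 := hv 3
  rw [show Pm 3 = pt4 from rfl, hexp] at E4
  simp only [pt4, map_add, map_mul, map_pow, eval_C, eval_X, map_one, map_zero, Matrix.cons_val_zero, Matrix.cons_val_one, Matrix.head_cons, Matrix.cons_val_two, Matrix.tail_cons, Fin.isValue] at E4
  have E5 := hv 4
  rw [show Pm 4 = pt5 from rfl, hexp] at E5
  simp only [pt5, map_add, map_mul, map_pow, eval_C, eval_X, map_one, map_zero, Matrix.cons_val_zero, Matrix.cons_val_one, Matrix.head_cons, Matrix.cons_val_two, Matrix.tail_cons, Fin.isValue] at E5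
  have E6 := hv 5
  rw [show Pm 5 = pt6 from rfl, hexp] at E6
  simp only [pt6, map_add, map_mul, map_pow, eval_C, eval_X, map_one, map_zero, Matrix.cons_val_zero, Matrix.cons_val_one, Matrix.head_cons, Matrix.cons_val_two, Matrix.tail_cons, Fin.isValue] at E6
  have E7 := hv 6
  rw [show Pm 6 = pt7 from rfl, hexp] at E7
  simp only [pt7, map_add, map_mul, map_pow, eval_C, eval_X, map_one, map_zero, Matrix.cons_val_zero, Matrix.cons_val_one, Matrix.head_cons, Matrix.cons_val_two, Matrix.tail_cons, Fin.isValue] at E7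
  have E8 := hv 7
  rw [show Pm 7 = pt8 from rfl, hexp] at E8
  simp only [pt8, map_add, map_mul, map_pow, eval_C, eval_X, map_one, map_zero, Matrix.cons_val_zero, Matrix.cons_val_one, Matrix.head_cons, Matrix.cons_val_two, Matrix.tail_cons, Fin.isValue] at E8
  set Av := coeff (E 0 0 0) f - coeff (E 1 1 0) f / 7 with hA
  set Bv := -(coeff (E 1 1 0) f / 14) with hB
  have hp0 : coeff (E 0 0 0) f = 1 * Av + (-2) * Bv := by rw [hA, hB]; ring
  have hp7 : coeff (E 1 1 0) f = 0 * Av + (-14) * Bv := by rw [hA, hB]; ring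
  have hm1 : coeff (E 1 0 0) f = 0 * Av + 6 * Bv := by
    linear_combination (((27/112):ℂ) + ((351/448):ℂ)*Complex.I) * E1 + (((3/112):ℂ) + ((17/448):ℂ)*Complex.I) * E2 + (((-3/448):ℂ) + ((19/448):ℂ)*Complex.I) * E3 + (((-27/448):ℂ) + ((-297/448):ℂ)*Complex.I) * E4 + (((95/448):ℂ) + ((-165/448):ℂ)*Complex.I) * E5 + (((-45/784):ℂ) + ((135/3136):ℂ)*Complex.I) * E6 + (((-477/2240):ℂ) + ((111/2240):ℂ)*Complex.I) * E7 + (((-559/3920):ℂ) + ((1173/15680):ℂ)*Complex.I) * E8 + (-((((-222641/176750):ℂ)) * coeff (E 1 0 0) f + (((-3354/17675):ℂ)) * coeff (E 0 1 0) f + (((31863/176750):ℂ)) * coeff (E 0 0 1) f + (((-9508167/63756250):ℂ) + ((7509519/63756250):ℂ)*Complex.I) * coeff (E 2 0 0) f + (((-321984/1275125):ℂ) + ((4932156/8925875):ℂ)*Complex.I) * coeff (E 0 2 0) f + (((52218819/446293750):ℂ) + ((936081/63756250):ℂ)*Complex.I) * coeff (E 0 0 2) f + (((-11627331/44629375):ℂ)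 + ((13772439/89258750):ℂ)*Complex.I) * coeff (E 1 1 0) f + (((-140770533/446293750):ℂ) + ((-73944369/446293750):ℂ)*Complex.I) * coeff (E 1 0 1) f + (((5624658/44629375):ℂ) + ((-10548726/44629375):ℂ)*Complex.I) * coeff (E 0 1 1) f)) * Complex.I_sq + (-6 : ℂ) * hB
  have hm2 : coeff (E 0 1 0) f = 0 * Av + (-10) * Bv := by
    linear_combination (((-153/224):ℂ) + ((-207/448):ℂ)*Complex.I) * E1 + (((-17/224):ℂ) + ((-33/448):ℂ)*Complex.I) * E2 + (((19/448):ℂ) + ((-27/448):ℂ)*Complex.I) * E3 + (((171/448):ℂ) + ((117/448):ℂ)*Complex.I) * E4 + (((-223/1344):ℂ) + ((387/448):ℂ)*Complex.I) * E5 + (((-9/98):ℂ) + ((-1009/3136):ℂ)*Complex.I) * E6 + (((159/448):ℂ) + ((-37/448):ℂ)*Complex.I) * E7 + (((559/2352):ℂ) + ((-391/3136):ℂ)*Complex.I) * E8 + (-((((2346/17675):ℂ)) * coeff (E 1 0 0) f + (((-2417/3535):ℂ)) * coeff (E 0 1 0) f + (((-10621/35350):ℂ)) * coeff (E 0 0 1)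 f + (((3169389/12751250):ℂ) + ((-2503173/12751250):ℂ)*Complex.I) * coeff (E 2 0 0) f + (((107328/255025):ℂ) + ((-1644052/1785175):ℂ)*Complex.I) * coeff (E 0 2 0) f + (((-17406273/89258750):ℂ) + ((-312027/12751250):ℂ)*Complex.I) * coeff (E 0 0 2) f + (((3875777/8925875):ℂ) + ((-4590813/17851750):ℂ)*Complex.I) * coeff (E 1 1 0) f + (((15428468/44629375):ℂ) + ((46070223/89258750):ℂ)*Complex.I) * coeff (E 1 0 1) f + (((-1874886/8925875):ℂ) + ((7086592/8925875):ℂ)*Complex.I) * coeff (E 0 1 1) f)) * Complex.I_sq + (10 : ℂ) * hB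
  have hm3 : coeff (E 0 0 1) f = 0 * Av + (-14) * Bv := by
    linear_combination (((-9/8):ℂ)) * E1 + (((-1/8):ℂ)) * E2 + (((1/32):ℂ)) * E3 + (((9/32):ℂ)) * E4 + (((15/32):ℂ) + ((5/8):ℂ)*Complex.I) * E5 + (((15/32):ℂ) + ((-5/8):ℂ)*Complex.I) * E7 + (-(((-1:ℂ)) * coeff (E 0 0 1) f + (((3/5):ℂ)) * coeff (E 2 0 0) f + (((-3/5):ℂ)) * coeff (E 0 0 2) f + ((1:ℂ)) * coeff (E 1 1 0) f + (((3/5):ℂ)*Complex.I) * coeff (E 1 0 1) f + ((1:ℂ)*Complex.I) * coeff (E 0 1 1) f)) * Complex.I_sq + (14 : ℂ) * hB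
  have hm4 : coeff (E 2 0 0) f = 1 * Av + (-2) * Bv := by
    linear_combination (((-27/32):ℂ)) * E1 + (((-1/32):ℂ)) * E2 + (((1/64):ℂ)) * E3 + (((-27/64):ℂ)) * E4 + (((9/64):ℂ) + ((3/16):ℂ)*Complex.I) * E5 + (((9/64):ℂ) + ((-3/16):ℂ)*Complex.I) * E7 + (-((((-3/10):ℂ)) * coeff (E 0 0 1) f + (((-41/50):ℂ)) * coeff (E 2 0 0) f + (((-9/50):ℂ)) * coeff (E 0 0 2) f + (((9/50):ℂ)*Complex.I) * coeff (E 1 0 1) f + (((3/10):ℂ)*Complex.I) * coeff (E 0 1 1) f)) * Complex.I_sq + (-1 : ℂ) * hA + (2 : ℂ) * hB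
  have hm5 : coeff (E 0 2 0) f = 1 * Av + (-2) * Bv := by
    linear_combination (((-9/16):ℂ) + ((9/32):ℂ)*Complex.I) * E1 + (((-1/16):ℂ) + ((1/32):ℂ)*Complex.I) * E2 + (((-1/64):ℂ) + ((-1/32):ℂ)*Complex.I) * E3 + (((-9/64):ℂ) + ((-9/32):ℂ)*Complex.I) * E4 + (((9/64):ℂ) + ((3/16):ℂ)*Complex.I) * E5 + (((-1/4):ℂ) + ((3/16):ℂ)*Complex.I) * E6 + (((-7/64):ℂ) + ((-3/8):ℂ)*Complex.I) * E7 + (-((((-2/5):ℂ)) * coeff (E 1 0 0) f + (((-3/5):ℂ)) * coeff (E 0 0 1) f + (((-7/50):ℂ)) * coeff (E 2 0 0) f + ((-1:ℂ)) * coeff (E 0 2 0) f + (((-43/50):ℂ)) * coeff (E 0 0 2) f + (((-6/25):ℂ) + ((9/50):ℂ)*Complex.I) * coeff (E 1 0 1) f + (((3/10):ℂ)*Complex.I) * coeff (E 0 1 1) f)) * Complex.I_sq + (-1 : ℂ) * hA + (2 : ℂ) * hB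
  have hm6 : coeff (E 0 0 2) f = 1 * Av + (-2) * Bv := by
    linear_combination (((-9/32):ℂ) + ((9/32):ℂ)*Complex.I) * E1 + (((1/32):ℂ) + ((1/32):ℂ)*Complex.I) * E2 + (((1/32):ℂ) + ((-1/32):ℂ)*Complex.I) * E3 + (((-9/32):ℂ) + ((-9/32):ℂ)*Complex.I) * E4 + (((-1/4):ℂ) + ((3/16):ℂ)*Complex.I) * E6 + (((-1/4):ℂ) + ((-3/16):ℂ)*Complex.I) * E7 + (-((((-2/5):ℂ)) * coeff (E 1 0 0) f + (((-3/10):ℂ)) * coeff (E 0 0 1) f + (((-8/25):ℂ)) * coeff (E 2 0 0) f + (((-17/25):ℂ)) * coeff (E 0 0 2) f + (((-6/25):ℂ)) * coeff (E 1 0 1) f)) * Complex.I_sq + (-1 : ℂ) * hA + (2 : ℂ) * hB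
  have hm8 : coeff (E 1 0 1) f = 0 * Av + (-10) * Bv := by
    linear_combination (((-27/224):ℂ) + ((-207/448):ℂ)*Complex.I) * E1 + (((-3/224):ℂ) + ((-33/448):ℂ)*Complex.I) * E2 + (((-9/448):ℂ) + ((-27/448):ℂ)*Complex.I) * E3 + (((-81/448):ℂ) + ((117/448):ℂ)*Complex.I) * E4 + (((-727/1344):ℂ) + ((163/448):ℂ)*Complex.I) * E5 + (((111/392):ℂ) + ((559/3136):ℂ)*Complex.I) * E6 + (((159/448):ℂ) + ((-37/448):ℂ)*Complex.I) * E7 + (((559/2352):ℂ) + ((-391/3136):ℂ)*Complex.I) * E8 + (-((((12951/17675):ℂ)) * coeff (E 1 0 0) f + (((1118/3535):ℂ)) * coeff (E 0 1 0) f + (((-10621/35350):ℂ)) * coeff (E 0 0 1) f + (((3169389/12751250):ℂ) + ((-2503173/12751250):ℂ)*Complex.I) * coeff (E 2 0 0) f + (((107328/255025):ℂ) + ((-1644052/1785175):ℂ)*Complex.I) * coeff (E 0 2 0) f + (((-17406273/89258750):ℂ) + ((-312027/12751250):ℂ)*Complex.I) * coeff (E 0 0 2) f + (((3875777/8925875):ℂ)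 + ((-4590813/17851750):ℂ)*Complex.I) * coeff (E 1 1 0) f + (((-13134332/44629375):ℂ) + ((3226023/89258750):ℂ)*Complex.I) * coeff (E 1 0 1) f + (((-1874886/8925875):ℂ) + ((-54108/8925875):ℂ)*Complex.I) * coeff (E 0 1 1) f)) * Complex.I_sq + (10 : ℂ) * hB
  have hm9 : coeff (E 0 1 1) f = 0 * Av + 6 * Bv := by
    linear_combination (((27/112):ℂ) + ((99/448):ℂ)*Complex.I) * E1 + (((3/112):ℂ) + ((45/448):ℂ)*Complex.I) * E2 + (((-3/448):ℂ) + ((-9/448):ℂ)*Complex.I) * E3 + (((-27/448):ℂ) + ((-45/448):ℂ)*Complex.I) * E4 + (((95/448):ℂ) + ((-165/448):ℂ)*Complex.I) * E5 + (((-45/784):ℂ) + ((135/3136):ℂ)*Complex.I) * E6 + (((-477/2240):ℂ) + ((111/2240):ℂ)*Complex.I) * E7 + (((-559/3920):ℂ) + ((1173/15680):ℂ)*Complex.I) * E8 + (-((((-45891/176750):ℂ)) * coeff (E 1 0 0) f + (((-3354/17675):ℂ)) * coeff (E 0 1 0) f + (((31863/176750):ℂ)) * coeff (E 0 0 1) f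 + (((-9508167/63756250):ℂ) + ((7509519/63756250):ℂ)*Complex.I) * coeff (E 2 0 0) f + (((-321984/1275125):ℂ) + ((4932156/8925875):ℂ)*Complex.I) * coeff (E 0 2 0) f + (((52218819/446293750):ℂ) + ((936081/63756250):ℂ)*Complex.I) * coeff (E 0 0 2) f + (((-11627331/44629375):ℂ) + ((13772439/89258750):ℂ)*Complex.I) * coeff (E 1 1 0) f + (((-140770533/446293750):ℂ) + ((-73944369/446293750):ℂ)*Complex.I) * coeff (E 1 0 1) f + (((-39004717/44629375):ℂ) + ((-10548726/44629375):ℂ)*Complex.I) * coeff (E 0 1 1) f)) * Complex.I_sq + (-6 : ℂ) * hB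
  refine ⟨Av, Bv, ?_⟩
  conv_lhs => rw [hexp, hp0, hm1, hm2, hm3, hm4, hm5, hm6, hp7, hm8, hm9]
  simp only [map_add, map_mul, map_one, map_zero, C_0, C_1, Q0, Q1]
  ring

lemma ratio (a b : ℂ) (p : Fin 3 → ℂ)
    (h0 : eval p (C a * Q0 + C b * Q1) = 0)
    (hd : ∀ i : Fin 3, eval p (pderiv i (C a * Q0 + C b * Q1)) = 0) :
    a = 11 * b ∨ a = 7 * b ∨ a = 3 * b ∨ a = -13 * b := by
  have r0 : a * (2 * p 0) + b * ((-4) * p 0 + (-14) * p 1 + (-10) * p 2 + 6) = 0 := by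
    have h := hd 0
    simp only [Q0, Q1, map_add, map_mul, map_pow, pderiv_mul, pderiv_pow, pderiv_X, pderiv_C, pderiv_one, eval_C, eval_X, map_one, map_zero, map_natCast, Pi.single_apply, Fin.isValue, Fin.reduceEq, if_true, if_false, reduceIte, Matrix.cons_val_zero, Matrix.cons_val_one, Matrix.head_cons, Matrix.cons_val_two, Matrix.tail_cons] at h
    linear_combination h
  have r1 : a * (2 * p 1) + b * ((-14) * p 0 + (-4) * p 1 + 6 * p 2 + (-10)) = 0 := by
    have h := hd 1
    simp only [Q0, Q1, map_add, map_mul, map_pow, pderiv_mul, pderiv_pow, pderiv_X, pderiv_C, pderiv_one, eval_C, eval_X, map_one, map_zero, map_natCast, Pi.single_apply, Fin.isValue, Fin.reduceEq, if_true, if_false, reduceIte, Matrix.cons_val_zero, Matrix.cons_val_one, Matrix.head_cons, Matrix.cons_val_two, Matrix.tail_cons] at h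
    linear_combination h
  have r2 : a * (2 * p 2) + b * ((-10) * p 0 + 6 * p 1 + (-4) * p 2 + (-14)) = 0 := by
    have h := hd 2
    simp only [Q0, Q1, map_add, map_mul, map_pow, pderiv_mul, pderiv_pow, pderiv_X, pderiv_C, pderiv_one, eval_C, eval_X, map_one, map_zero, map_natCast, Pi.single_apply, Fin.isValue, Fin.reduceEq, if_true, if_false, reduceIte, Matrix.cons_val_zero, Matrix.cons_val_one, Matrix.head_cons, Matrix.cons_val_two, Matrix.tail_cons] at h
    linear_combination h
  have he : a * (p 0 ^ 2 + p 1 ^ 2 + p 2 ^ 2 + 1)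
      + b * ((-2) * p 0 ^ 2 + (-2) * p 1 ^ 2 + (-2) * p 2 ^ 2 + (-14) * (p 0 * p 1)
        + (-10) * (p 0 * p 2) + 6 * (p 1 * p 2) + 6 * p 0 + (-10) * p 1 + (-14) * p 2
        + (-2)) = 0 := by
    simp only [Q0, Q1, map_add, map_mul, map_pow, eval_C, eval_X, map_one, map_zero, Matrix.cons_val_zero, Matrix.cons_val_one, Matrix.head_cons, Matrix.cons_val_two, Matrix.tail_cons, Fin.isValue] at h0
    linear_combination h0
  have F1 : (a - 11 * b) * (p 0 + p 1 + p 2 + 1) = 0 := by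
    linear_combination he + ((1 - p 0)/2) * r0 + ((1 - p 1)/2) * r1 + ((1 - p 2)/2) * r2
  have F2 : (a - 7 * b) * (p 0 + p 1 - p 2 - 1) = 0 := by
    linear_combination -he + ((1 + p 0)/2) * r0 + ((1 + p 1)/2) * r1 + ((-1 + p 2)/2) * r2
  have F3 : (a - 3 * b) * (p 0 - p 1 + p 2 - 1) = 0 := by
    linear_combination -he + ((1 + p 0)/2) * r0 + ((-1 + p 1)/2) * r1 + ((1 + p 2)/2) * r2
  have F4 : (a + 13 * b) * (p 0 - p 1 - p 2 + 1) = 0 := by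
    linear_combination he + ((1 - p 0)/2) * r0 + ((-1 - p 1)/2) * r1 + ((-1 - p 2)/2) * r2
  rcases mul_eq_zero.mp F1 with h1 | h1
  · exact Or.inl (by linear_combination h1)
  rcases mul_eq_zero.mp F2 with h2 | h2
  · exact Or.inr (Or.inl (by linear_combination h2))
  rcases mul_eq_zero.mp F3 with h3 | h3
  · exact Or.inr (Or.inr (Or.inl (by linear_combination h3)))
  rcases mul_eq_zero.mp F4 with h4 | h4
  · exact Or.inr (Or.inr (Or.inr (by linear_combination h4)))
  exfalso
  have h5 : (4 : ℂ) = 0 := by linear_combination h1 - h2 - h3 + h4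
  norm_num at h5

lemma Gne11 : G (11) ≠ 0 := by
  intro h
  have h2 := congrArg (eval ![(1:ℂ), 2, 3]) h
  simp only [G, Q0, Q1, map_add, map_mul, map_pow, eval_C, eval_X, map_one, map_zero, Matrix.cons_val_zero, Matrix.cons_val_one, Matrix.head_cons, Matrix.cons_val_two, Matrix.tail_cons, Fin.isValue] at h2
  norm_num at h2
lemma Gsing11 : SingularAt3 (G (11)) ![1, 1, 1] := by
  refine ⟨?_, ?_, ?_⟩
  · intro i
    fin_cases i <;> norm_num
  · simp only [G, Q0, Q1, map_add, map_mul, map_pow, eval_C, eval_X, map_one, map_zero, Matrix.cons_val_zero, Matrix.cons_val_one, Matrix.head_cons, Matrix.cons_val_two, Matrix.tail_cons, Fin.isValue]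
    norm_num
  · intro i
    have g0 : eval ![1, 1, 1] (pderiv (0 : Fin 3) (G (11))) = 0 := by
      simp only [G, Q0, Q1, map_add, map_mul, map_pow, pderiv_mul, pderiv_pow, pderiv_X, pderiv_C, pderiv_one, eval_C, eval_X, map_one, map_zero, map_natCast, Pi.single_apply, Fin.isValue, Fin.reduceEq, if_true, if_false, reduceIte, Matrix.cons_val_zero, Matrix.cons_val_one, Matrix.head_cons, Matrix.cons_val_two, Matrix.tail_cons]; norm_num
    have g1 : eval ![1, 1, 1] (pderiv (1 : Fin 3) (G (11))) = 0 := by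
      simp only [G, Q0, Q1, map_add, map_mul, map_pow, pderiv_mul, pderiv_pow, pderiv_X, pderiv_C, pderiv_one, eval_C, eval_X, map_one, map_zero, map_natCast, Pi.single_apply, Fin.isValue, Fin.reduceEq, if_true, if_false, reduceIte, Matrix.cons_val_zero, Matrix.cons_val_one, Matrix.head_cons, Matrix.cons_val_two, Matrix.tail_cons]; norm_num
    have g2 : eval ![1, 1, 1] (pderiv (2 : Fin 3) (G (11))) = 0 := by
      simp only [G, Q0, Q1, map_add, map_mul, map_pow, pderiv_mul, pderiv_pow, pderiv_X, pderiv_C, pderiv_one, eval_C, eval_X, map_one, map_zero, map_natCast, Pi.single_apply, Fin.isValue, Fin.reduceEq, if_true, if_false, reduceIte, Matrix.cons_val_zero, Matrix.cons_val_one, Matrix.head_cons, Matrix.cons_val_two, Matrix.tail_cons]; norm_num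
    fin_cases i
    exacts [g0, g1, g2]
lemma Gne7 : G (7) ≠ 0 := by
  intro h
  have h2 := congrArg (eval ![(1:ℂ), 2, 3]) h
  simp only [G, Q0, Q1, map_add, map_mul, map_pow, eval_C, eval_X, map_one, map_zero, Matrix.cons_val_zero, Matrix.cons_val_one, Matrix.head_cons, Matrix.cons_val_two, Matrix.tail_cons, Fin.isValue] at h2
  norm_num at h2
lemma Gsing7 : SingularAt3 (G (7)) ![-1, -1, 1] := by
  refine ⟨?_, ?_, ?_⟩
  · intro i
    fin_cases i <;> norm_num
  · simp only [G, Q0, Q1, map_add, map_mul, map_pow, eval_C, eval_X, map_one, map_zero, Matrix.cons_val_zero, Matrix.cons_val_one, Matrix.head_cons, Matrix.cons_val_two, Matrix.tail_cons, Fin.isValue]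
    norm_num
  · intro i
    have g0 : eval ![-1, -1, 1] (pderiv (0 : Fin 3) (G (7))) = 0 := by
      simp only [G, Q0, Q1, map_add, map_mul, map_pow, pderiv_mul, pderiv_pow, pderiv_X, pderiv_C, pderiv_one, eval_C, eval_X, map_one, map_zero, map_natCast, Pi.single_apply, Fin.isValue, Fin.reduceEq, if_true, if_false, reduceIte, Matrix.cons_val_zero, Matrix.cons_val_one, Matrix.head_cons, Matrix.cons_val_two, Matrix.tail_cons]; norm_num
    have g1 : eval ![-1, -1, 1] (pderiv (1 : Fin 3) (G (7))) = 0 := by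
      simp only [G, Q0, Q1, map_add, map_mul, map_pow, pderiv_mul, pderiv_pow, pderiv_X, pderiv_C, pderiv_one, eval_C, eval_X, map_one, map_zero, map_natCast, Pi.single_apply, Fin.isValue, Fin.reduceEq, if_true, if_false, reduceIte, Matrix.cons_val_zero, Matrix.cons_val_one, Matrix.head_cons, Matrix.cons_val_two, Matrix.tail_cons]; norm_num
    have g2 : eval ![-1, -1, 1] (pderiv (2 : Fin 3) (G (7))) = 0 := by
      simp only [G, Q0, Q1, map_add, map_mul, map_pow, pderiv_mul, pderiv_pow, pderiv_X, pderiv_C, pderiv_one, eval_C, eval_X, map_one, map_zero, map_natCast, Pi.single_apply, Fin.isValue, Fin.reduceEq, if_true, if_false, reduceIte, Matrix.cons_val_zero, Matrix.cons_val_one, Matrix.head_cons, Matrix.cons_val_two, Matrix.tail_cons]; norm_num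
    fin_cases i
    exacts [g0, g1, g2]
lemma Gne3 : G (3) ≠ 0 := by
  intro h
  have h2 := congrArg (eval ![(1:ℂ), 2, 3]) h
  simp only [G, Q0, Q1, map_add, map_mul, map_pow, eval_C, eval_X, map_one, map_zero, Matrix.cons_val_zero, Matrix.cons_val_one, Matrix.head_cons, Matrix.cons_val_two, Matrix.tail_cons, Fin.isValue] at h2
  norm_num at h2
lemma Gsing3 : SingularAt3 (G (3)) ![-1, 1, -1] := by
  refine ⟨?_, ?_, ?_⟩
  · intro i
    fin_cases i <;> norm_num
  · simp only [G, Q0, Q1, map_add, map_mul, map_pow, eval_C, eval_X, map_one, map_zero, Matrix.cons_val_zero, Matrix.cons_val_one, Matrix.head_cons, Matrix.cons_val_two, Matrix.tail_cons, Fin.isValue]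
    norm_num
  · intro i
    have g0 : eval ![-1, 1, -1] (pderiv (0 : Fin 3) (G (3))) = 0 := by
      simp only [G, Q0, Q1, map_add, map_mul, map_pow, pderiv_mul, pderiv_pow, pderiv_X, pderiv_C, pderiv_one, eval_C, eval_X, map_one, map_zero, map_natCast, Pi.single_apply, Fin.isValue, Fin.reduceEq, if_true, if_false, reduceIte, Matrix.cons_val_zero, Matrix.cons_val_one, Matrix.head_cons, Matrix.cons_val_two, Matrix.tail_cons]; norm_num
    have g1 : eval ![-1, 1, -1] (pderiv (1 : Fin 3) (G (3))) = 0 := by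
      simp only [G, Q0, Q1, map_add, map_mul, map_pow, pderiv_mul, pderiv_pow, pderiv_X, pderiv_C, pderiv_one, eval_C, eval_X, map_one, map_zero, map_natCast, Pi.single_apply, Fin.isValue, Fin.reduceEq, if_true, if_false, reduceIte, Matrix.cons_val_zero, Matrix.cons_val_one, Matrix.head_cons, Matrix.cons_val_two, Matrix.tail_cons]; norm_num
    have g2 : eval ![-1, 1, -1] (pderiv (2 : Fin 3) (G (3))) = 0 := by
      simp only [G, Q0, Q1, map_add, map_mul, map_pow, pderiv_mul, pderiv_pow, pderiv_X, pderiv_C, pderiv_one, eval_C, eval_X, map_one, map_zero, map_natCast, Pi.single_apply, Fin.isValue, Fin.reduceEq, if_true, if_false, reduceIte, Matrix.cons_val_zero, Matrix.cons_val_one, Matrix.head_cons, Matrix.cons_val_two, Matrix.tail_cons]; norm_num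
    fin_cases i
    exacts [g0, g1, g2]
lemma Gnem13 : G (-13) ≠ 0 := by
  intro h
  have h2 := congrArg (eval ![(1:ℂ), 2, 3]) h
  simp only [G, Q0, Q1, map_add, map_mul, map_pow, eval_C, eval_X, map_one, map_zero, Matrix.cons_val_zero, Matrix.cons_val_one, Matrix.head_cons, Matrix.cons_val_two, Matrix.tail_cons, Fin.isValue] at h2
  norm_num at h2
lemma Gsingm13 : SingularAt3 (G (-13)) ![1, -1, -1] := by
  refine ⟨?_, ?_, ?_⟩
  · intro i
    fin_cases i <;> norm_num
  · simp only [G, Q0, Q1, map_add, map_mul, map_pow, eval_C, eval_X, map_one, map_zero, Matrix.cons_val_zero, Matrix.cons_val_one, Matrix.head_cons, Matrix.cons_val_two, Matrix.tail_cons, Fin.isValue]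
    norm_num
  · intro i
    have g0 : eval ![1, -1, -1] (pderiv (0 : Fin 3) (G (-13))) = 0 := by
      simp only [G, Q0, Q1, map_add, map_mul, map_pow, pderiv_mul, pderiv_pow, pderiv_X, pderiv_C, pderiv_one, eval_C, eval_X, map_one, map_zero, map_natCast, Pi.single_apply, Fin.isValue, Fin.reduceEq, if_true, if_false, reduceIte, Matrix.cons_val_zero, Matrix.cons_val_one, Matrix.head_cons, Matrix.cons_val_two, Matrix.tail_cons]; norm_num
    have g1 : eval ![1, -1, -1] (pderiv (1 : Fin 3) (G (-13))) = 0 := by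
      simp only [G, Q0, Q1, map_add, map_mul, map_pow, pderiv_mul, pderiv_pow, pderiv_X, pderiv_C, pderiv_one, eval_C, eval_X, map_one, map_zero, map_natCast, Pi.single_apply, Fin.isValue, Fin.reduceEq, if_true, if_false, reduceIte, Matrix.cons_val_zero, Matrix.cons_val_one, Matrix.head_cons, Matrix.cons_val_two, Matrix.tail_cons]; norm_num
    have g2 : eval ![1, -1, -1] (pderiv (2 : Fin 3) (G (-13))) = 0 := by
      simp only [G, Q0, Q1, map_add, map_mul, map_pow, pderiv_mul, pderiv_pow, pderiv_X, pderiv_C, pderiv_one, eval_C, eval_X, map_one, map_zero, map_natCast, Pi.single_apply, Fin.isValue, Fin.reduceEq, if_true, if_false, reduceIte, Matrix.cons_val_zero, Matrix.cons_val_one, Matrix.head_cons, Matrix.cons_val_two, Matrix.tail_cons]; norm_num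
    fin_cases i
    exacts [g0, g1, g2]

lemma dist11_7 :
    Submodule.span ℂ {G (11)} ≠ Submodule.span ℂ {G (7)} := by
  intro h
  have hm : G (11) ∈ Submodule.span ℂ {G (7)} :=
    h ▸ Submodule.mem_span_singleton_self _
  obtain ⟨cc, hc⟩ := Submodule.mem_span_singleton.mp hm
  have h1 := congrArg (eval ![(1:ℂ), 2, 3]) hc
  have h2 := congrArg (eval ![(0:ℂ), 0, 0]) hc
  rw [smul_eq_C_mul] at h1 h2
  simp only [G, Q0, Q1, map_add, map_mul, map_pow, eval_C, eval_X, map_one, map_zero, Matrix.cons_val_zero, Matrix.cons_val_one, Matrix.head_cons, Matrix.cons_val_two, Matrix.tail_cons, Fin.isValue] at h1 h2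
  have hD : (312 : ℂ) = 0 := by linear_combination (-5 : ℂ) * h1 + (-3 : ℂ) * h2
  norm_num at hD
lemma dist11_3 :
    Submodule.span ℂ {G (11)} ≠ Submodule.span ℂ {G (3)} := by
  intro h
  have hm : G (11) ∈ Submodule.span ℂ {G (3)} :=
    h ▸ Submodule.mem_span_singleton_self _
  obtain ⟨cc, hc⟩ := Submodule.mem_span_singleton.mp hm
  have h1 := congrArg (eval ![(1:ℂ), 2, 3]) hc
  have h2 := congrArg (eval ![(0:ℂ), 0, 0]) hc
  rw [smul_eq_C_mul] at h1 h2
  simp only [G, Q0, Q1, map_add, map_mul, map_pow, eval_C, eval_X, map_one, map_zero, Matrix.cons_val_zero, Matrix.cons_val_one, Matrix.head_cons, Matrix.cons_val_two, Matrix.tail_cons, Fin.isValue] at h1 h2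
  have hD : (624 : ℂ) = 0 := by linear_combination (-1 : ℂ) * h1 + (-63 : ℂ) * h2
  norm_num at hD
lemma dist11_m13 :
    Submodule.span ℂ {G (11)} ≠ Submodule.span ℂ {G (-13)} := by
  intro h
  have hm : G (11) ∈ Submodule.span ℂ {G (-13)} :=
    h ▸ Submodule.mem_span_singleton_self _
  obtain ⟨cc, hc⟩ := Submodule.mem_span_singleton.mp hm
  have h1 := congrArg (eval ![(1:ℂ), 2, 3]) hc
  have h2 := congrArg (eval ![(0:ℂ), 0, 0]) hc
  rw [smul_eq_C_mul] at h1 h2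
  simp only [G, Q0, Q1, map_add, map_mul, map_pow, eval_C, eval_X, map_one, map_zero, Matrix.cons_val_zero, Matrix.cons_val_one, Matrix.head_cons, Matrix.cons_val_two, Matrix.tail_cons, Fin.isValue] at h1 h2
  have hD : (1872 : ℂ) = 0 := by linear_combination (15 : ℂ) * h1 + (-303 : ℂ) * h2
  norm_num at hD
lemma dist7_3 :
    Submodule.span ℂ {G (7)} ≠ Submodule.span ℂ {G (3)} := by
  intro h
  have hm : G (7) ∈ Submodule.span ℂ {G (3)} :=
    h ▸ Submodule.mem_span_singleton_self _
  obtain ⟨cc, hc⟩ := Submodule.mem_span_singleton.mp hm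
  have h1 := congrArg (eval ![(1:ℂ), 2, 3]) hc
  have h2 := congrArg (eval ![(0:ℂ), 0, 0]) hc
  rw [smul_eq_C_mul] at h1 h2
  simp only [G, Q0, Q1, map_add, map_mul, map_pow, eval_C, eval_X, map_one, map_zero, Matrix.cons_val_zero, Matrix.cons_val_one, Matrix.head_cons, Matrix.cons_val_two, Matrix.tail_cons, Fin.isValue] at h1 h2
  have hD : (312 : ℂ) = 0 := by linear_combination (-1 : ℂ) * h1 + (-63 : ℂ) * h2
  norm_num at hD
lemma dist7_m13 :
    Submodule.span ℂ {G (7)} ≠ Submodule.span ℂ {G (-13)} := by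
  intro h
  have hm : G (7) ∈ Submodule.span ℂ {G (-13)} :=
    h ▸ Submodule.mem_span_singleton_self _
  obtain ⟨cc, hc⟩ := Submodule.mem_span_singleton.mp hm
  have h1 := congrArg (eval ![(1:ℂ), 2, 3]) hc
  have h2 := congrArg (eval ![(0:ℂ), 0, 0]) hc
  rw [smul_eq_C_mul] at h1 h2
  simp only [G, Q0, Q1, map_add, map_mul, map_pow, eval_C, eval_X, map_one, map_zero, Matrix.cons_val_zero, Matrix.cons_val_one, Matrix.head_cons, Matrix.cons_val_two, Matrix.tail_cons, Fin.isValue] at h1 h2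
  have hD : (1560 : ℂ) = 0 := by linear_combination (15 : ℂ) * h1 + (-303 : ℂ) * h2
  norm_num at hD
lemma dist3_m13 :
    Submodule.span ℂ {G (3)} ≠ Submodule.span ℂ {G (-13)} := by
  intro h
  have hm : G (3) ∈ Submodule.span ℂ {G (-13)} :=
    h ▸ Submodule.mem_span_singleton_self _
  obtain ⟨cc, hc⟩ := Submodule.mem_span_singleton.mp hm
  have h1 := congrArg (eval ![(1:ℂ), 2, 3]) hc
  have h2 := congrArg (eval ![(0:ℂ), 0, 0]) hc
  rw [smul_eq_C_mul] at h1 h2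
  simp only [G, Q0, Q1, map_add, map_mul, map_pow, eval_C, eval_X, map_one, map_zero, Matrix.cons_val_zero, Matrix.cons_val_one, Matrix.head_cons, Matrix.cons_val_two, Matrix.tail_cons, Fin.isValue] at h1 h2
  have hD : (1248 : ℂ) = 0 := by linear_combination (15 : ℂ) * h1 + (-303 : ℂ) * h2
  norm_num at hD

lemma pt1_ne : ∀ j, pt1 j ≠ 0 := by
  intro j
  fin_cases j
  · show (((-1) : ℂ) * Complex.I) ≠ 0
    intro h
    have h2 : ((0 : ℂ))^2 + ((-1))^2 = 0 := by
      linear_combination ((0 : ℂ) - ((-1)) * Complex.I) * h + (((-1) : ℂ))^2 * Complex.I_sq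
    norm_num at h2
  · show (((-1/3) : ℂ) * Complex.I) ≠ 0
    intro h
    have h2 : ((0 : ℂ))^2 + ((-1/3))^2 = 0 := by
      linear_combination ((0 : ℂ) - ((-1/3)) * Complex.I) * h + (((-1/3) : ℂ))^2 * Complex.I_sq
    norm_num at h2
  · show (((1/3) : ℂ)) ≠ 0
    intro h
    have h2 : (((1/3) : ℂ))^2 + (0)^2 = 0 := by
      linear_combination (((1/3) : ℂ) - (0) * Complex.I) * h + ((0 : ℂ))^2 * Complex.I_sq
    norm_num at h2
lemma pt2_ne : ∀ j, pt2 j ≠ 0 := by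
  intro j
  fin_cases j
  · show (((-1) : ℂ) * Complex.I) ≠ 0
    intro h
    have h2 : ((0 : ℂ))^2 + ((-1))^2 = 0 := by
      linear_combination ((0 : ℂ) - ((-1)) * Complex.I) * h + (((-1) : ℂ))^2 * Complex.I_sq
    norm_num at h2
  · show (((-3) : ℂ) * Complex.I) ≠ 0
    intro h
    have h2 : ((0 : ℂ))^2 + ((-3))^2 = 0 := by
      linear_combination ((0 : ℂ) - ((-3)) * Complex.I) * h + (((-3) : ℂ))^2 * Complex.I_sq
    norm_num at h2
  · show ((3 : ℂ)) ≠ 0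
    intro h
    have h2 : ((3 : ℂ))^2 + (0)^2 = 0 := by
      linear_combination ((3 : ℂ) - (0) * Complex.I) * h + ((0 : ℂ))^2 * Complex.I_sq
    norm_num at h2
lemma pt3_ne : ∀ j, pt3 j ≠ 0 := by
  intro j
  fin_cases j
  · show ((1 : ℂ) * Complex.I) ≠ 0
    intro h
    have h2 : ((0 : ℂ))^2 + (1)^2 = 0 := by
      linear_combination ((0 : ℂ) - (1) * Complex.I) * h + ((1 : ℂ))^2 * Complex.I_sq
    norm_num at h2
  · show ((3 : ℂ) * Complex.I) ≠ 0
    intro h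
    have h2 : ((0 : ℂ))^2 + (3)^2 = 0 := by
      linear_combination ((0 : ℂ) - (3) * Complex.I) * h + ((3 : ℂ))^2 * Complex.I_sq
    norm_num at h2
  · show ((3 : ℂ)) ≠ 0
    intro h
    have h2 : ((3 : ℂ))^2 + (0)^2 = 0 := by
      linear_combination ((3 : ℂ) - (0) * Complex.I) * h + ((0 : ℂ))^2 * Complex.I_sq
    norm_num at h2
lemma pt4_ne : ∀ j, pt4 j ≠ 0 := by
  intro j
  fin_cases j
  · show ((1 : ℂ) * Complex.I) ≠ 0
    intro h
    have h2 : ((0 : ℂ))^2 + (1)^2 = 0 := by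
      linear_combination ((0 : ℂ) - (1) * Complex.I) * h + ((1 : ℂ))^2 * Complex.I_sq
    norm_num at h2
  · show (((1/3) : ℂ) * Complex.I) ≠ 0
    intro h
    have h2 : ((0 : ℂ))^2 + ((1/3))^2 = 0 := by
      linear_combination ((0 : ℂ) - ((1/3)) * Complex.I) * h + (((1/3) : ℂ))^2 * Complex.I_sq
    norm_num at h2
  · show (((1/3) : ℂ)) ≠ 0
    intro h
    have h2 : (((1/3) : ℂ))^2 + (0)^2 = 0 := by
      linear_combination (((1/3) : ℂ) - (0) * Complex.I) * h + ((0 : ℂ))^2 * Complex.I_sq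
    norm_num at h2
lemma pt5_ne : ∀ j, pt5 j ≠ 0 := by
  intro j
  fin_cases j
  · show (((-4/5) : ℂ) + ((-3/5)) * Complex.I) ≠ 0
    intro h
    have h2 : (((-4/5) : ℂ))^2 + ((-3/5))^2 = 0 := by
      linear_combination (((-4/5) : ℂ) - ((-3/5)) * Complex.I) * h + (((-3/5) : ℂ))^2 * Complex.I_sq
    norm_num at h2
  · show (((-1) : ℂ) * Complex.I) ≠ 0
    intro h
    have h2 : ((0 : ℂ))^2 + ((-1))^2 = 0 := by
      linear_combination ((0 : ℂ) - ((-1)) * Complex.I) * h + (((-1) : ℂ))^2 * Complex.I_sq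
    norm_num at h2
  · show (((3/5) : ℂ) + ((-4/5)) * Complex.I) ≠ 0
    intro h
    have h2 : (((3/5) : ℂ))^2 + ((-4/5))^2 = 0 := by
      linear_combination (((3/5) : ℂ) - ((-4/5)) * Complex.I) * h + (((-4/5) : ℂ))^2 * Complex.I_sq
    norm_num at h2
lemma pt6_ne : ∀ j, pt6 j ≠ 0 := by
  intro j
  fin_cases j
  · show (((4/5) : ℂ) + ((3/5)) * Complex.I) ≠ 0
    intro h
    have h2 : (((4/5) : ℂ))^2 + ((3/5))^2 = 0 := by
      linear_combination (((4/5) : ℂ) - ((3/5)) * Complex.I) * h + (((3/5) : ℂ))^2 * Complex.I_sq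
    norm_num at h2
  · show ((1 : ℂ) * Complex.I) ≠ 0
    intro h
    have h2 : ((0 : ℂ))^2 + (1)^2 = 0 := by
      linear_combination ((0 : ℂ) - (1) * Complex.I) * h + ((1 : ℂ))^2 * Complex.I_sq
    norm_num at h2
  · show (((3/5) : ℂ) + ((-4/5)) * Complex.I) ≠ 0
    intro h
    have h2 : (((3/5) : ℂ))^2 + ((-4/5))^2 = 0 := by
      linear_combination (((3/5) : ℂ) - ((-4/5)) * Complex.I) * h + (((-4/5) : ℂ))^2 * Complex.I_sq
    norm_num at h2
lemma pt7_ne : ∀ j, pt7 j ≠ 0 := by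
  intro j
  fin_cases j
  · show (((4/5) : ℂ) + ((-3/5)) * Complex.I) ≠ 0
    intro h
    have h2 : (((4/5) : ℂ))^2 + ((-3/5))^2 = 0 := by
      linear_combination (((4/5) : ℂ) - ((-3/5)) * Complex.I) * h + (((-3/5) : ℂ))^2 * Complex.I_sq
    norm_num at h2
  · show (((-1) : ℂ) * Complex.I) ≠ 0
    intro h
    have h2 : ((0 : ℂ))^2 + ((-1))^2 = 0 := by
      linear_combination ((0 : ℂ) - ((-1)) * Complex.I) * h + (((-1) : ℂ))^2 * Complex.I_sq
    norm_num at h2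
  · show (((3/5) : ℂ) + ((4/5)) * Complex.I) ≠ 0
    intro h
    have h2 : (((3/5) : ℂ))^2 + ((4/5))^2 = 0 := by
      linear_combination (((3/5) : ℂ) - ((4/5)) * Complex.I) * h + (((4/5) : ℂ))^2 * Complex.I_sq
    norm_num at h2
lemma pt8_ne : ∀ j, pt8 j ≠ 0 := by
  intro j
  fin_cases j
  · show (((-2236/2525) : ℂ) + ((-1173/2525)) * Complex.I) ≠ 0
    intro h
    have h2 : (((-2236/2525) : ℂ))^2 + ((-1173/2525))^2 = 0 := by
      linear_combination (((-2236/2525) : ℂ) - ((-1173/2525)) * Complex.I) * h + (((-1173/2525) : ℂ))^2 * Complex.I_sq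
    norm_num at h2
  · show (((672/505) : ℂ) + ((-559/505)) * Complex.I) ≠ 0
    intro h
    have h2 : (((672/505) : ℂ))^2 + ((-559/505))^2 = 0 := by
      linear_combination (((672/505) : ℂ) - ((-559/505)) * Complex.I) * h + (((-559/505) : ℂ))^2 * Complex.I_sq
    norm_num at h2
  · show (((-1677/2525) : ℂ) + ((-4036/2525)) * Complex.I) ≠ 0
    intro h
    have h2 : (((-1677/2525) : ℂ))^2 + ((-4036/2525))^2 = 0 := by
      linear_combination (((-1677/2525) : ℂ) - ((-4036/2525)) * Complex.I) * h + (((-4036/2525) : ℂ))^2 * Complex.I_sq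
    norm_num at h2
lemma Pm_ne : ∀ (i : Fin 8) (j : Fin 3), Pm i j ≠ 0 := by
  intro i j
  fin_cases i
  exacts [pt1_ne j, pt2_ne j, pt3_ne j, pt4_ne j, pt5_ne j, pt6_ne j, pt7_ne j, pt8_ne j]


lemma main_set_eq : singularLines Pm 2 =
    {Submodule.span ℂ {G 11}, Submodule.span ℂ {G 7},
     Submodule.span ℂ {G 3}, Submodule.span ℂ {G (-13)}} := by
  ext L
  simp only [singularLines, Set.mem_setOf_eq, Set.mem_insert_iff, Set.mem_singleton_iff]
  constructor
  · rintro ⟨f, hf0, hL, hdeg, hv, p, hptor, h0, hd⟩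
    obtain ⟨a, b, hfab⟩ := stepA f hdeg hv
    subst hfab
    have hcase := ratio a b p h0 hd
    have hb : b ≠ 0 := by
      rintro rfl
      apply hf0
      rcases hcase with h | h | h | h <;> rw [h] <;> simp
    have hbu : IsUnit b := isUnit_iff_ne_zero.mpr hb
    rcases hcase with h | h | h | h
    · refine Or.inl (hL.trans ?_)
      rw [show C a * Q0 + C b * Q1 = b • G 11 by
        rw [h, G, smul_eq_C_mul]; simp only [map_mul]; ring]
      exact Submodule.span_singleton_smul_eq hbu _
    · refine Or.inr (Or.inl (hL.trans ?_))
      rw [show C a * Q0 + C b * Q1 = b • G 7 by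
        rw [h, G, smul_eq_C_mul]; simp only [map_mul]; ring]
      exact Submodule.span_singleton_smul_eq hbu _
    · refine Or.inr (Or.inr (Or.inl (hL.trans ?_)))
      rw [show C a * Q0 + C b * Q1 = b • G 3 by
        rw [h, G, smul_eq_C_mul]; simp only [map_mul]; ring]
      exact Submodule.span_singleton_smul_eq hbu _
    · refine Or.inr (Or.inr (Or.inr (hL.trans ?_)))
      rw [show C a * Q0 + C b * Q1 = b • G (-13) by
        rw [h, G, smul_eq_C_mul]; simp only [map_mul]; ring]
      exact Submodule.span_singleton_smul_eq hbu _
  · rintro (rfl | rfl | rfl | rfl)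
    · exact ⟨G 11, Gne11, rfl, degG _, hGP _, ![1, 1, 1], Gsing11⟩
    · exact ⟨G 7, Gne7, rfl, degG _, hGP _, ![-1, -1, 1], Gsing7⟩
    · exact ⟨G 3, Gne3, rfl, degG _, hGP _, ![-1, 1, -1], Gsing3⟩
    · exact ⟨G (-13), Gnem13, rfl, degG _, hGP _, ![1, -1, -1], Gsingm13⟩

end QDD

open QDD in
theorem quadric_discriminant_degree :
    ∃ pts : Fin 8 → Fin 3 → ℂ, (∀ i j, pts i j ≠ 0) ∧
      (singularLines pts 2).Finite ∧ (singularLines pts 2).ncard = 4 := by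
  refine ⟨Pm, Pm_ne, ?_, ?_⟩
  · rw [main_set_eq]
    exact (((Set.finite_singleton _).insert _).insert _).insert _
  · rw [main_set_eq]
    have d1 := dist11_7
    have d2 := dist11_3
    have d3 := dist11_m13
    have d4 := dist7_3
    have d5 := dist7_m13
    have d6 := dist3_m13
    rw [Set.ncard_insert_of_notMem (by simp [d1, d2, d3]),
        Set.ncard_insert_of_notMem (by simp [d4, d5]),
        Set.ncard_insert_of_notMem (by simp [d6]),
        Set.ncard_singleton]

end
end

section
/- For an integer d ≥ 1 let Λ_d = {(i,j,l) ∈ ℤ³ : i ≥ 1, j ≥ 1, i + j ≤ d − 1, 0 ≤ l ≤ d − i − j}, and for (i,j,l) ∈ Λ_d set λ(i,j,l) = ((3(d−i) + 2 + 2j + 2l)·(d−i+1))/2, which is an integer. Then there exists a constant C > 0 such that for every d ≥ 1 the number of triples (i,j,l) ∈ Λ_d with λ(i,j,l) odd differs from d³/12 by at most C·d². -/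
/-- The index set `Λ_d = {(i,j,l) ∈ ℤ³ : i ≥ 1, j ≥ 1, i+j ≤ d−1, 0 ≤ l ≤ d−i−j}`. -/
def LambdaSet (d : ℤ) : Set (ℤ × ℤ × ℤ) :=
  {t | 1 ≤ t.1 ∧ 1 ≤ t.2.1 ∧ t.1 + t.2.1 ≤ d - 1 ∧ 0 ≤ t.2.2 ∧ t.2.2 ≤ d - t.1 - t.2.1}

/-- Twice the quantity `λ(i,j,l)`, namely `(3(d−i)+2+2j+2l)·(d−i+1)`. -/
def lamNum (d : ℤ) (t : ℤ × ℤ × ℤ) : ℤ :=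
  (3 * (d - t.1) + 2 + 2 * t.2.1 + 2 * t.2.2) * (d - t.1 + 1)

/-! Write `m = d - i` and `u = j + l`: then `λ = (3m + 2 + 2u)(m + 1)/2` depends only on `(m, u)`.
It is odd for every `u` when `m ≡ 1 (mod 4)`, for no `u` when `m ≡ 3`, and for `m = 2q` exactly
when `u ≡ q (mod 2)`. So the slice of fixed `m` contains `m(m+1)/2 - 1`, `0` or
`q² + [q even](q - 1)` admissible triples, and summing over `m < d` gives the count exactly:
`48 N(d) = 4d³ + O(d²)`, with a quadratic correction depending on `d mod 4`. -/

open Finset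

theorem two_dvd_lamNum (d : ℤ) (t : ℤ × ℤ × ℤ) : 2 ∣ lamNum d t := by
  have h : lamNum d t =
      (d - t.1) * (d - t.1 + 1) + 2 * ((d - t.1 + 1 + t.2.1 + t.2.2) * (d - t.1 + 1)) := by
    unfold lamNum; ring
  rw [h]
  exact ((Int.even_mul_succ_self _).add (even_two_mul _)).two_dvd

/-- `λ(i, j, l)` in the coordinates `m = d - i`, `u = j + l`. -/
def halfLam (m u : ℕ) : ℕ := (3 * m + 2 + 2 * u) * (m + 1) / 2

theorem lamNum_div_two (d : ℤ) {m s : ℕ} (l : ℕ) (hs : s ≤ m) :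
    lamNum d (d - m, m - s, l) / 2 = halfLam m (m - s + l) := by
  rw [halfLam, Int.natCast_div, lamNum]
  push_cast [Nat.cast_sub hs]
  congr 1
  ring

theorem odd_halfLam_four_mul_add_one (k u : ℕ) : Odd (halfLam (4 * k + 1) u) := by
  have h : (3 * (4 * k + 1) + 2 + 2 * u) * (4 * k + 1 + 1) =
      2 * ((2 * (6 * k + 2 + u) + 1) * (2 * k + 1)) := by ring
  rw [halfLam, h, Nat.mul_div_cancel_left _ two_pos]
  exact (odd_two_mul_add_one _).mul (odd_two_mul_add_one _)

theorem even_halfLam_four_mul_add_three (k u : ℕ) : Even (halfLam (4 * k + 3) u) := by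
  have h : (3 * (4 * k + 3) + 2 + 2 * u) * (4 * k + 3 + 1) =
      2 * ((3 * (4 * k + 3) + 2 + 2 * u) * (2 * (k + 1))) := by ring
  rw [halfLam, h, Nat.mul_div_cancel_left _ two_pos]
  exact (even_two_mul _).mul_left _

theorem odd_halfLam_two_mul_iff (q u : ℕ) : Odd (halfLam (2 * q) u) ↔ (u + q) % 2 = 0 := by
  have h : (3 * (2 * q) + 2 + 2 * u) * (2 * q + 1) = 2 * ((3 * q + 1 + u) * (2 * q + 1)) := by ring
  rw [halfLam, h, Nat.mul_div_cancel_left _ two_pos, Nat.odd_mul,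
    and_iff_left (odd_two_mul_add_one q), Nat.odd_iff]
  omega

/-- The `l` with `(d - m, m - s, l) ∈ Λ_d` and `λ` odd. -/
def column (m s : ℕ) : Finset ℕ := (range (s + 1)).filter fun l => Odd (halfLam m (m - s + l))

def sliceCount (m : ℕ) : ℕ := ∑ s ∈ Ico 1 m, #(column m s)

theorem card_filter_range_mod_two (n : ℕ) {r : ℕ} (hr : r < 2) :
    #{l ∈ range n | l % 2 = r} = (n + 1 - r) / 2 := by
  induction n with
  | zero => simp; omega
  | succ n ih =>
    rw [range_add_one, filter_insert]
    split_ifs with h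
    · rw [card_insert_of_notMem (by simp), ih]; omega
    · rw [ih]; omega

theorem card_column_four_mul_add_one (k s : ℕ) : #(column (4 * k + 1) s) = s + 1 := by
  rw [column, filter_true_of_mem fun l _ => odd_halfLam_four_mul_add_one k _, card_range]

theorem card_column_four_mul_add_three (k s : ℕ) : #(column (4 * k + 3) s) = 0 := by
  rw [card_eq_zero, column, filter_eq_empty_iff]
  exact fun l _ => Nat.not_odd_iff_even.mpr (even_halfLam_four_mul_add_three k _)

theorem card_column_two_mul {q s : ℕ} (hs : s ≤ 2 * q) :
    #(column (2 * q) s) = (s + 2 - (s + q) % 2) / 2 := by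
  have h : column (2 * q) s = {l ∈ range (s + 1) | l % 2 = (s + q) % 2} := by
    refine filter_congr fun l _ => ?_
    rw [odd_halfLam_two_mul_iff]
    omega
  rw [h, card_filter_range_mod_two _ (Nat.mod_lt _ two_pos)]

theorem sum_range_two_mul_parity_count (q n : ℕ) :
    ∑ s ∈ range (2 * n), (s + 2 - (s + q) % 2) / 2 = n ^ 2 + (1 - q % 2) * n := by
  induction n with
  | zero => simp
  | succ n ih =>
    rw [mul_add, mul_one, sum_range_succ, sum_range_succ, ih]
    have : (2 * n + 2 - (2 * n + q) % 2) / 2 + (2 * n + 1 + 2 - (2 * n + 1 + q) % 2) / 2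
        = 2 * n + 1 + (1 - q % 2) := by omega
    rw [add_assoc, this]
    ring

theorem sliceCount_four_mul_add_one (k : ℕ) :
    sliceCount (4 * k + 1) + 1 = (4 * k + 1) * (2 * k + 1) := by
  have h := sum_range_id_mul_two (4 * k + 2)
  rw [sum_range_succ', sum_range_eq_add_Ico _ (by omega),
    show 4 * k + 2 - 1 = 4 * k + 1 from rfl] at h
  rw [sliceCount, sum_congr rfl fun s _ => card_column_four_mul_add_one k s]
  linarith

theorem sliceCount_four_mul_add_three (k : ℕ) : sliceCount (4 * k + 3) = 0 :=
  sum_eq_zero fun s _ => card_column_four_mul_add_three k s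

theorem sliceCount_two_mul {q : ℕ} (hq : 0 < q) :
    sliceCount (2 * q) + (1 - q % 2) = q ^ 2 + (1 - q % 2) * q := by
  have h := sum_range_two_mul_parity_count q q
  rw [sum_range_eq_add_Ico _ (by omega)] at h
  rw [sliceCount, sum_congr rfl fun s hs => card_column_two_mul (mem_Ico.mp hs).2.le]
  omega

def oddCount (d : ℕ) : ℕ := ∑ m ∈ range d, sliceCount m

/-- `48 · oddCount d - 4 d³`. -/
def countDefect (d : ℕ) : ℤ :=
  match d % 4 with
  | 0 => -6 * d ^ 2 - 40 * d + 48
  | 1 => -6 * d ^ 2 - 16 * d + 18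
  | 2 => 6 * d ^ 2 - 16 * d - 24
  | _ => 6 * d ^ 2 - 40 * d + 6

theorem forty_eight_mul_sliceCount {d : ℕ} (hd : 1 ≤ d) :
    48 * (sliceCount d : ℤ) =
      4 * ((d + 1) ^ 3 - d ^ 3) + countDefect (d + 1) - countDefect d := by
  obtain ⟨k, r, hr, rfl⟩ : ∃ k r, r < 4 ∧ d = 4 * k + r :=
    ⟨d / 4, d % 4, Nat.mod_lt _ (by norm_num), (Nat.div_add_mod d 4).symm⟩
  have hmod : (4 * k + r) % 4 = r := by omega
  have hmod' : (4 * k + r + 1) % 4 = (r + 1) % 4 := by omega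
  interval_cases r
  · have h := sliceCount_two_mul (q := 2 * k) (by omega)
    rw [show 2 * (2 * k) = 4 * k + 0 by ring, show 2 * k % 2 = 0 by omega] at h
    simp only [countDefect, hmod, hmod']
    zify at h
    push_cast at h ⊢
    linear_combination 48 * h
  · have h := sliceCount_four_mul_add_one k
    simp only [countDefect, hmod, hmod']
    zify at h
    push_cast at h ⊢
    linear_combination 48 * h
  · have h := sliceCount_two_mul (q := 2 * k + 1) (by omega)
    rw [show 2 * (2 * k + 1) = 4 * k + 2 by ring, show (2 * k + 1) % 2 = 1 by omega] at h
    simp only [countDefect, hmod, hmod']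
    zify at h
    push_cast at h ⊢
    linear_combination 48 * h
  · simp only [countDefect, hmod, hmod', sliceCount_four_mul_add_three]
    push_cast
    ring

theorem forty_eight_mul_oddCount {d : ℕ} (hd : 1 ≤ d) :
    48 * (oddCount d : ℤ) = 4 * d ^ 3 + countDefect d := by
  induction d, hd using Nat.le_induction with
  | base => simp [oddCount, sliceCount, countDefect]
  | succ d hd ih =>
    rw [oddCount, sum_range_succ, ← oddCount]
    push_cast
    linear_combination ih + forty_eight_mul_sliceCount hd

theorem abs_countDefect_le {d : ℕ} (hd : 1 ≤ d) : |countDefect d| ≤ 94 * d ^ 2 := by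
  have hd' : (1 : ℤ) ≤ d := by exact_mod_cast hd
  rw [abs_le]
  unfold countDefect
  split <;> constructor <;> nlinarith

def toLambda (d : ℕ) (x : (_ : ℕ) × (_ : ℕ) × ℕ) : ℤ × ℤ × ℤ :=
  ((d : ℤ) - x.1, (x.1 : ℤ) - x.2.1, (x.2.2 : ℤ))

theorem toLambda_injective (d : ℕ) : Function.Injective (toLambda d) := by
  rintro ⟨m, s, l⟩ ⟨m', s', l'⟩ h
  simp only [toLambda, Prod.mk.injEq] at h
  obtain ⟨rfl, rfl, rfl⟩ : m = m' ∧ s = s' ∧ l = l' := by omega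
  rfl

theorem oddSet_eq_image (d : ℕ) :
    {t ∈ LambdaSet d | Odd (lamNum d t / 2)} =
      toLambda d '' ↑((range d).sigma fun m => (Ico 1 m).sigma fun s => column m s) := by
  ext ⟨i, j, l⟩
  simp only [LambdaSet, column, toLambda, Set.mem_ofPred_eq, coe_sigma, Set.mem_image, Set.mem_sigma_iff,
    mem_coe, mem_range, mem_Ico, mem_filter, Sigma.exists, Prod.mk.injEq]
  constructor
  · rintro ⟨⟨hi, hj, hij, hl, hl'⟩, hodd⟩
    obtain ⟨m, hm⟩ : ∃ m : ℕ, (m : ℤ) = d - i := ⟨(d - i).toNat, by omega⟩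
    obtain ⟨s, hs⟩ : ∃ s : ℕ, (s : ℤ) = d - i - j := ⟨(d - i - j).toNat, by omega⟩
    lift l to ℕ using hl
    have hsm : s ≤ m := by omega
    rw [show i = d - m by omega, show j = m - s by omega, lamNum_div_two d l hsm,
      Int.odd_coe_nat] at hodd
    exact ⟨m, s, l, ⟨by omega, ⟨by omega, by omega⟩, by omega, hodd⟩,
      by omega, by omega, rfl⟩
  · rintro ⟨m, s, l', ⟨hm, ⟨hs, hsm⟩, hl, hodd⟩, rfl, rfl, rfl⟩
    rw [lamNum_div_two d l' hsm.le, Int.odd_coe_nat]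
    exact ⟨⟨by omega, by omega, by omega, by omega, by omega⟩, hodd⟩

theorem ncard_oddSet (d : ℕ) :
    {t ∈ LambdaSet d | Odd (lamNum d t / 2)}.ncard = oddCount d := by
  rw [oddSet_eq_image, Set.ncard_image_of_injective _ (toLambda_injective d),
    Set.ncard_coe_finset]
  simp only [card_sigma, oddCount, sliceCount]

theorem parity_count_circuitD :
    (∀ d : ℤ, ∀ t ∈ LambdaSet d, 2 ∣ lamNum d t) ∧
    ∃ C : ℝ, 0 < C ∧ ∀ d : ℕ, 1 ≤ d →
      |({t ∈ LambdaSet (d : ℤ) | Odd (lamNum (d : ℤ) t / 2)}.ncard : ℝ) -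
          (d : ℝ) ^ 3 / 12| ≤ C * (d : ℝ) ^ 2 := by
  refine ⟨fun d t _ => two_dvd_lamNum d t, 2, two_pos, fun d hd => ?_⟩
  have hN : (48 : ℝ) * oddCount d = 4 * d ^ 3 + countDefect d := by
    exact_mod_cast forty_eight_mul_oddCount hd
  have hD : |(countDefect d : ℝ)| ≤ 94 * d ^ 2 := by
    exact_mod_cast abs_countDefect_le hd
  calc |(_ : ℝ) - d ^ 3 / 12| = |(countDefect d : ℝ) / 48| := by
        rw [ncard_oddSet]
        congr 1
        linarith
    _ = |(countDefect d : ℝ)| / 48 := by rw [abs_div, abs_of_pos (by norm_num : (0 : ℝ) < 48)]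
    _ ≤ 2 * d ^ 2 := by linarith [sq_nonneg (d : ℝ)]
end
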